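/- arXiv:cs/0603013 — 8 statements merged into one kernel-verified Lean document; each statement's English description precedes it below -/
import Mathlib

section
/- The MacWilliams transformation H: ℂ[W]_{≤n} → ℂ[W]_{≤n} defined by H(f)(W) = (1+(q-1)W)^n f((1-W)/(1+(q-1)W)) is ℂ-linear and satisfies H²(f) = q^n f for all f ∈ ℂ[W]_{≤n}. -/
open Polynomial

/-- The MacWilliams transformation on `ℂ[W]_{≤n}`:
`𝐇(f) = (1+(q-1)W)^n f((1-W)/(1+(q-1)W))`, written in closed form on the coefficients
of `f` (for `deg f ≤ n`): `𝐇(f) = ∑_{j≤n} f_j (1-W)^j (1+(q-1)W)^{n-j}`. -/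
noncomputable def macwTrafo (q n : ℕ) (f : Polynomial ℂ) : Polynomial ℂ :=
  ∑ j ∈ Finset.range (n + 1),
    Polynomial.C (f.coeff j) *
      ((1 - Polynomial.X) ^ j * (1 + Polynomial.C ((q : ℂ) - 1) * Polynomial.X) ^ (n - j))

lemma macw_natDegree_le (q n : ℕ) (f : Polynomial ℂ) :
    (macwTrafo q n f).natDegree ≤ n := by
  apply Polynomial.natDegree_sum_le_of_forall_le
  intro j hj
  simp only [Finset.mem_range] at hj
  have hj' : j ≤ n := Nat.lt_succ_iff.mp hj
  calc (Polynomial.C (f.coeff j) *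
      ((1 - Polynomial.X) ^ j * (1 + Polynomial.C ((q : ℂ) - 1) * Polynomial.X) ^ (n - j))).natDegree
      ≤ _ := natDegree_mul_le
    _ ≤ n := by
        have h1 : ((1 - X : Polynomial ℂ) ^ j).natDegree ≤ j := by compute_degree
        have h2 : ((1 + C ((q:ℂ)-1) * X) ^ (n-j)).natDegree ≤ n - j := by compute_degree
        have := natDegree_mul_le (p := (1 - X : Polynomial ℂ) ^ j)
          (q := (1 + C ((q:ℂ)-1) * X) ^ (n-j))
        simp only [natDegree_C]
        omega

lemma macw_eval (q n : ℕ) (f : Polynomial ℂ) (x : ℂ) :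
    (macwTrafo q n f).eval x
      = ∑ j ∈ Finset.range (n + 1),
          f.coeff j * (1 - x) ^ j * (1 + ((q : ℂ) - 1) * x) ^ (n - j) := by
  simp [macwTrafo, eval_finset_sum, mul_assoc]

/-- The MacWilliams transformation `𝐇 : ℂ[W]_{≤n} → ℂ[W]_{≤n}` is
`ℂ`-linear and satisfies `𝐇²(f) = qⁿ f` for all `f` of degree at most `n`. -/
theorem stmt_5 (q n : ℕ) (hq : 2 ≤ q) :
    (∀ (a b : ℂ) (f g : Polynomial ℂ),
        macwTrafo q n (Polynomial.C a * f + Polynomial.C b * g)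
          = Polynomial.C a * macwTrafo q n f + Polynomial.C b * macwTrafo q n g) ∧
    (∀ f : Polynomial ℂ, f.natDegree ≤ n →
        macwTrafo q n (macwTrafo q n f) = Polynomial.C ((q : ℂ) ^ n) * f) := by
  constructor
  · intro a b f g
    simp only [macwTrafo, coeff_add, coeff_C_mul, Finset.mul_sum, ← Finset.sum_add_distrib]
    refine Finset.sum_congr rfl fun j _ => ?_
    simp only [C_add, C_mul]
    ring
  · intro f hf
    have hq1 : (q : ℂ) - 1 ≠ 0 := by
      have h1 : (q : ℂ) ≠ 1 := by exact_mod_cast (by omega : q ≠ 1)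
      simpa [sub_eq_zero] using h1
    apply Polynomial.eq_of_infinite_eval_eq
    apply Set.Infinite.mono (s := {-((q:ℂ)-1)⁻¹}ᶜ)
    · -- {x0}ᶜ ⊆ equal set
      intro x hx
      simp only [Set.mem_compl_iff, Set.mem_singleton_iff] at hx
      have hb : (1 + ((q:ℂ) - 1) * x) ≠ 0 := by
        intro h
        apply hx
        field_simp
        linear_combination h
      set a : ℂ := 1 - x with ha
      set b : ℂ := 1 + ((q:ℂ)-1) * x with hbdef
      -- key sub-identities
      have h1 : (1 : ℂ) - a / b = (q : ℂ) * x / b := by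
        field_simp [ha, hbdef]; ring
      have h2 : (1 : ℂ) + ((q:ℂ)-1) * (a / b) = (q : ℂ) / b := by
        field_simp [ha, hbdef]; ring
      -- eval of T g at x equals b^n * (eval of g at a/b) when natDegree g ≤ n
      have key : ∀ g : Polynomial ℂ, g.natDegree ≤ n →
          (macwTrafo q n g).eval x = b ^ n * g.eval (a / b) := by
        intro g hg
        rw [macw_eval, Polynomial.eval_eq_sum_range' (Nat.lt_succ_of_le hg),
          Finset.mul_sum]
        refine Finset.sum_congr rfl fun j hj => ?_
        simp only [Finset.mem_range] at hj
        have hjn : j ≤ n := Nat.lt_succ_iff.mp hj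
        rw [div_pow]
        have : b ^ n = b ^ j * b ^ (n - j) := by
          rw [← pow_add]; congr 1; omega
        rw [this]
        field_simp
        ring
      have hTd : (macwTrafo q n f).natDegree ≤ n := macw_natDegree_le q n f
      rw [Set.mem_setOf_eq, key _ hTd, macw_eval]
      rw [h1, h2]
      rw [Finset.mul_sum]
      rw [eval_mul, eval_C, Polynomial.eval_eq_sum_range' (Nat.lt_succ_of_le hf),
        Finset.mul_sum]
      refine Finset.sum_congr rfl fun j hj => ?_
      simp only [Finset.mem_range] at hj
      have hjn : j ≤ n := Nat.lt_succ_iff.mp hj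
      have hbn : b ^ n = b ^ j * b ^ (n - j) := by
        rw [← pow_add]; congr 1; omega
      have hqn : (q:ℂ) ^ n = (q:ℂ) ^ j * (q:ℂ) ^ (n - j) := by
        rw [← pow_add]; congr 1; omega
      rw [div_pow, div_pow, hbn, hqn]
      field_simp
      ring
    · -- infinite
      apply Set.Finite.infinite_compl
      exact Set.finite_singleton _
end

section
/- With the notation of the controller canonical form, the orthogonal complement of Δ = im (I A; 0 B) in F^δ × F^δ with respect to the canonical bilinear form is Δ^⊥ = {(X, −XA) : X = (X_1,…,X_δ) ∈ F^δ with X_j = 0 for all j ∈ J}, where J = {δ_1, δ_1+δ_2, …, Σ_{j=1}^r δ_j}. -/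
open Matrix

/-- With `(A,B)` the controller-canonical state matrices (blocks of
positive sizes `d 1, …, d r`, `r ≤ k`), the orthogonal complement of
`Δ = {(X, XA + uB)}` in `F^δ × F^δ` w.r.t. the canonical bilinear form is
`Δ^⊥ = {(X, −XA) : X_j = 0 for all j ∈ J}`, where `J` is the set of last positions
of the blocks (partial sums of the `d i`). -/
theorem stmt_9 {r k : ℕ} (hrk : r ≤ k) {F : Type} [Field F] [Fintype F] [DecidableEq F]
    (d : Fin r → ℕ) (hd : ∀ i, 0 < d i)
    (A : Matrix (Σ i, Fin (d i)) (Σ i, Fin (d i)) F)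
    (B : Matrix (Fin k) (Σ i, Fin (d i)) F)
    (hA : ∀ x y, A x y = if x.1 = y.1 ∧ (x.2 : ℕ) + 1 = (y.2 : ℕ) then 1 else 0)
    (hB : ∀ i y, B i y = if (i : ℕ) = (y.1 : ℕ) ∧ (y.2 : ℕ) = 0 then 1 else 0) :
    {v : ((Σ i, Fin (d i)) → F) × ((Σ i, Fin (d i)) → F) |
        ∀ w : ((Σ i, Fin (d i)) → F) × ((Σ i, Fin (d i)) → F),
          (∃ u : Fin k → F, w.2 = w.1 ᵥ* A + u ᵥ* B) →
            (∑ x, v.1 x * w.1 x) + (∑ x, v.2 x * w.2 x) = 0}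
      = {v | (∀ x : Σ i, Fin (d i), (x.2 : ℕ) = d x.1 - 1 → v.1 x = 0) ∧
             v.2 = -(v.1 ᵥ* A)} := by
  classical
  -- helper sum computations
  have hAsum : ∀ (c : (Σ i, Fin (d i)) → F) (x : Σ i, Fin (d i)),
      (∑ y, c y * A x y) =
        if h : (x.2 : ℕ) + 1 < d x.1 then c ⟨x.1, ⟨(x.2 : ℕ) + 1, h⟩⟩ else 0 := by
    intro c x
    split_ifs with h
    · rw [Finset.sum_eq_single (⟨x.1, ⟨(x.2 : ℕ) + 1, h⟩⟩ : Σ i, Fin (d i))]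
      · rw [hA]; simp
      · intro y _ hy
        rw [hA, if_neg, mul_zero]
        rintro ⟨h1, h2⟩
        apply hy
        obtain ⟨j, m⟩ := y
        cases h1
        dsimp only at h2 ⊢
        simp only [Sigma.mk.inj_iff, heq_eq_eq, true_and]
        exact Fin.ext (by first | omega | (dsimp only; omega) | (simp only [Fin.val_mk]; omega))
      · intro hmem; exact absurd (Finset.mem_univ _) hmem
    · apply Finset.sum_eq_zero
      intro y _
      rw [hA, if_neg, mul_zero]
      rintro ⟨h1, h2⟩
      obtain ⟨j, m⟩ := y
      dsimp only at h1 h2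
      cases h1
      have := m.isLt
      omega
  have hBsum : ∀ (c : (Σ i, Fin (d i)) → F) (i : Fin k),
      (∑ y, c y * B i y) =
        if h : (i : ℕ) < r then c ⟨⟨(i : ℕ), h⟩, ⟨0, hd _⟩⟩ else 0 := by
    intro c i
    split_ifs with h
    · rw [Finset.sum_eq_single (⟨⟨(i : ℕ), h⟩, ⟨0, hd _⟩⟩ : Σ i, Fin (d i))]
      · rw [hB]; simp
      · intro y _ hy
        rw [hB, if_neg, mul_zero]
        rintro ⟨h1, h2⟩
        apply hy
        obtain ⟨j, m⟩ := y
        have hj : j = ⟨(i : ℕ), h⟩ := Fin.ext h1.symm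
        cases hj
        dsimp only at h2 ⊢
        simp only [Sigma.mk.inj_iff, heq_eq_eq, true_and]
        exact Fin.ext (by first | omega | (dsimp only; omega) | (simp only [Fin.val_mk]; omega))
      · intro hmem; exact absurd (Finset.mem_univ _) hmem
    · apply Finset.sum_eq_zero
      intro y _
      rw [hB, if_neg, mul_zero]
      rintro ⟨h1, h2⟩
      exact h (h1 ▸ y.1.isLt)
  have hAsum' : ∀ (c : (Σ i, Fin (d i)) → F) (y : Σ i, Fin (d i)),
      (∑ x, c x * A x y) =
        if h : 0 < (y.2 : ℕ) then
          c ⟨y.1, ⟨(y.2 : ℕ) - 1, lt_of_le_of_lt (Nat.sub_le _ _) y.2.isLt⟩⟩ else 0 := by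
    intro c y
    split_ifs with h
    · rw [Finset.sum_eq_single
        (⟨y.1, ⟨(y.2 : ℕ) - 1, lt_of_le_of_lt (Nat.sub_le _ _) y.2.isLt⟩⟩ : Σ i, Fin (d i))]
      · rw [hA, if_pos, mul_one]
        exact ⟨rfl, Nat.succ_pred_eq_of_pos h⟩
      · intro x _ hx
        rw [hA, if_neg, mul_zero]
        rintro ⟨h1, h2⟩
        apply hx
        obtain ⟨j, m⟩ := x
        cases h1
        dsimp only at h2 ⊢
        simp only [Sigma.mk.inj_iff, heq_eq_eq, true_and]
        exact Fin.ext (by first | omega | (dsimp only; omega) | (simp only [Fin.val_mk]; omega))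
      · intro hmem; exact absurd (Finset.mem_univ _) hmem
    · apply Finset.sum_eq_zero
      intro x _
      rw [hA, if_neg, mul_zero]
      rintro ⟨h1, h2⟩
      omega
  have hvA : ∀ (c : (Σ i, Fin (d i)) → F) (y : Σ i, Fin (d i)),
      (c ᵥ* A) y = ∑ x, c x * A x y := fun c y => rfl
  ext v
  simp only [Set.mem_setOf_eq]
  constructor
  · intro h
    have C : ∀ (X : (Σ i, Fin (d i)) → F) (u : Fin k → F),
        (∑ x, v.1 x * X x) + (∑ x, v.2 x * (X ᵥ* A + u ᵥ* B) x) = 0 :=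
      fun X u => h (X, X ᵥ* A + u ᵥ* B) ⟨u, rfl⟩
    have C1 : ∀ x0, v.1 x0 + (∑ y, v.2 y * A x0 y) = 0 := by
      intro x0
      have := C (Pi.single x0 1) 0
      simpa [Matrix.vecMul, dotProduct, Pi.single_apply, mul_ite, ite_mul,
        Finset.mul_sum, mul_comm] using this
    have C2 : ∀ i, (∑ y, v.2 y * B i y) = 0 := by
      intro i
      have := C 0 (Pi.single i 1)
      simpa [Matrix.vecMul, dotProduct, Pi.single_apply, mul_ite, ite_mul,
        Finset.mul_sum, mul_comm] using this
    constructor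
    · intro x hx
      have hc := C1 x
      rw [hAsum, dif_neg (by omega)] at hc
      linear_combination hc
    · funext y
      rw [Pi.neg_apply, hvA, hAsum']
      by_cases h0 : 0 < (y.2 : ℕ)
      · rw [dif_pos h0]
        obtain ⟨j, m⟩ := y
        dsimp only at h0 ⊢
        have hsub : (m : ℕ) - 1 < d j := lt_of_le_of_lt (Nat.sub_le _ _) m.isLt
        have hc := C1 ⟨j, ⟨(m : ℕ) - 1, hsub⟩⟩
        have hlt : ((⟨j, ⟨(m : ℕ) - 1, hsub⟩⟩ : Σ i, Fin (d i)).2 : ℕ) + 1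
            < d (⟨j, ⟨(m : ℕ) - 1, hsub⟩⟩ : Σ i, Fin (d i)).1 := by
          dsimp only; omega
        rw [hAsum, dif_pos hlt] at hc
        have hy : (⟨j, ⟨(m : ℕ) - 1 + 1, hlt⟩⟩ : Σ i, Fin (d i)) = ⟨j, m⟩ := by
          simp only [Sigma.mk.inj_iff, heq_eq_eq, true_and]
          exact Fin.ext (by first | omega | (dsimp only; omega) | (simp only [Fin.val_mk]; omega))
        rw [hy] at hc
        linear_combination hc
      · rw [dif_neg h0, neg_zero]
        have hi : ((y.1 : ℕ)) < k := lt_of_lt_of_le y.1.isLt hrk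
        have hc := C2 ⟨(y.1 : ℕ), hi⟩
        have hir : ((⟨(y.1 : ℕ), hi⟩ : Fin k) : ℕ) < r := y.1.isLt
        rw [hBsum, dif_pos hir] at hc
        have hy : y = ⟨y.1, ⟨0, hd y.1⟩⟩ := by
          obtain ⟨j, m⟩ := y
          dsimp only at h0 ⊢
          simp only [Sigma.mk.inj_iff, heq_eq_eq, true_and]
          exact Fin.ext (by first | omega | (dsimp only; omega) | (simp only [Fin.val_mk]; omega))
        rw [hy]
        exact hc
  · rintro ⟨htop, hv2⟩ w ⟨u, hw⟩
    obtain ⟨X, w2⟩ := w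
    simp only at hw
    subst hw
    have hv2' : ∀ y : Σ i, Fin (d i), v.2 y =
        if h : 0 < ((y.2 : ℕ)) then
          -(v.1 ⟨y.1, ⟨(y.2 : ℕ) - 1, lt_of_le_of_lt (Nat.sub_le _ _) y.2.isLt⟩⟩) else 0 := by
      intro y
      rw [hv2, Pi.neg_apply, hvA, hAsum']
      split_ifs
      · rfl
      · exact neg_zero
    have hv2'0 : ∀ j : Fin r, v.2 ⟨j, ⟨0, hd j⟩⟩ = 0 := by
      intro j
      rw [hv2' ⟨j, ⟨0, hd j⟩⟩]
      exact dif_neg (by first | omega | (dsimp only; omega) | (simp only [Fin.val_mk]; omega))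
    have hv2'' : ∀ (x : Σ i, Fin (d i)) (h : (x.2 : ℕ) + 1 < d x.1),
        v.2 ⟨x.1, ⟨(x.2 : ℕ) + 1, h⟩⟩ = -(v.1 x) := by
      intro x h
      rw [hv2' ⟨x.1, ⟨(x.2 : ℕ) + 1, h⟩⟩]
      rw [dif_pos (Nat.succ_pos _ :
        0 < ((⟨x.1, ⟨(x.2 : ℕ) + 1, h⟩⟩ : Σ i, Fin (d i)).2 : ℕ))]
      first
        | rfl
        | congr 1
        | exact congrArg Neg.neg (congrArg v.1 (Sigma.ext rfl (heq_of_eq (Fin.ext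
            (by first | omega | (dsimp only; omega) | (simp only [Fin.val_mk]; omega))))))
    have key : (∑ x, v.1 x * X x) + (∑ y, v.2 y * ((X ᵥ* A) + (u ᵥ* B)) y)
        = (∑ x, X x * (v.1 x + ∑ y, v.2 y * A x y)) + ∑ i, u i * ∑ y, v.2 y * B i y := by
      have e1 : (∑ y, v.2 y * ((X ᵥ* A) + (u ᵥ* B)) y)
          = (∑ y, v.2 y * ∑ x, X x * A x y) + ∑ y, v.2 y * ∑ i, u i * B i y := by
        rw [← Finset.sum_add_distrib]
        apply Finset.sum_congr rfl
        intro y _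
        have h1 : (X ᵥ* A) y = ∑ x, X x * A x y := rfl
        have h2 : (u ᵥ* B) y = ∑ i, u i * B i y := rfl
        rw [Pi.add_apply, h1, h2, mul_add]
      have e2 : (∑ y, v.2 y * ∑ x, X x * A x y) = ∑ x, X x * ∑ y, v.2 y * A x y := by
        simp_rw [Finset.mul_sum]
        rw [Finset.sum_comm]
        exact Finset.sum_congr rfl fun x _ => Finset.sum_congr rfl fun y _ => by ring
      have e3 : (∑ y, v.2 y * ∑ i, u i * B i y) = ∑ i, u i * ∑ y, v.2 y * B i y := by
        simp_rw [Finset.mul_sum]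
        rw [Finset.sum_comm]
        exact Finset.sum_congr rfl fun i _ => Finset.sum_congr rfl fun y _ => by ring
      rw [e1, e2, e3, ← add_assoc, ← Finset.sum_add_distrib]
      congr 1
      exact Finset.sum_congr rfl fun x _ => by ring
    rw [key]
    rw [Finset.sum_eq_zero, Finset.sum_eq_zero, add_zero]
    · -- B part
      intro i _
      rw [hBsum]
      split_ifs with h
      · rw [hv2'0, mul_zero]
      · rw [mul_zero]
    · -- A part
      intro x _
      rw [hAsum]
      split_ifs with h
      · rw [hv2'' x h]
        ring
      · have := x.2.isLt
        rw [htop x (by omega), add_zero, mul_zero]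
end

section
/- Let Δ ⊆ F^δ × F^δ be the space of connected state pairs and Δ^- := span{(0, e_i) : i ∉ I}, where I = {1, 1+δ_1, …, 1+Σ_{i=1}^{r-1} δ_i} and e_i are the standard unit vectors of F^δ. Then Δ ⊕ Δ^- = F^δ × F^δ. -/
open Matrix

/-- Let `Δ = {(X, XA + uB)}` be the space of connected state pairs
of the controller canonical form (state space `Σ i : Fin k, Fin (d i)`), and let
`Δ⁻ = span{(0, e_x) : x not the first position of its block}`.  Then
`Δ ⊕ Δ⁻ = F^δ × F^δ`, i.e. `Δ` and `Δ⁻` are complementary subspaces. -/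
theorem stmt_11 {k : ℕ} {F : Type} [Field F] [Fintype F] [DecidableEq F]
    (d : Fin k → ℕ)
    (A : Matrix (Σ i, Fin (d i)) (Σ i, Fin (d i)) F)
    (B : Matrix (Fin k) (Σ i, Fin (d i)) F)
    (hA : ∀ x y, A x y = if x.1 = y.1 ∧ (x.2 : ℕ) + 1 = (y.2 : ℕ) then 1 else 0)
    (hB : ∀ i y, B i y = if i = y.1 ∧ (y.2 : ℕ) = 0 then 1 else 0)
    (Δ Δm : Submodule F (((Σ i, Fin (d i)) → F) × ((Σ i, Fin (d i)) → F)))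
    (hΔ : (Δ : Set (((Σ i, Fin (d i)) → F) × ((Σ i, Fin (d i)) → F)))
        = {w | ∃ u : Fin k → F, w.2 = w.1 ᵥ* A + u ᵥ* B})
    (hΔm : Δm = Submodule.span F
        {w : ((Σ i, Fin (d i)) → F) × ((Σ i, Fin (d i)) → F) |
          ∃ x : Σ i, Fin (d i), (x.2 : ℕ) ≠ 0 ∧ w = (0, Pi.single x 1)}) :
    IsCompl Δ Δm := by
  classical
  set V := ((Σ i, Fin (d i)) → F) with hV
  -- the subspace of pairs (0, Z) with Z vanishing on block-first positions
  let P : Submodule F (V × V) :=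
  { carrier := {w | w.1 = 0 ∧ ∀ y : Σ i, Fin (d i), (y.2 : ℕ) = 0 → w.2 y = 0}
    add_mem' := by
      rintro a b ⟨ha1, ha2⟩ ⟨hb1, hb2⟩
      refine ⟨by simp [ha1, hb1], fun y hy => ?_⟩
      rw [Prod.snd_add, Pi.add_apply, ha2 y hy, hb2 y hy, add_zero]
    zero_mem' := ⟨rfl, fun y hy => rfl⟩
    smul_mem' := by
      rintro c a ⟨ha1, ha2⟩
      refine ⟨by simp [ha1], fun y hy => ?_⟩
      rw [Prod.smul_snd, Pi.smul_apply, ha2 y hy, smul_zero] }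
  have hΔmP : Δm ≤ P := by
    rw [hΔm, Submodule.span_le]
    rintro w ⟨x, hx, rfl⟩
    refine ⟨rfl, fun y hy => ?_⟩
    have hne : y ≠ x := by
      rintro rfl; exact hx hy
    simp [Pi.single_apply, hne]
  constructor
  · -- disjoint
    rw [Submodule.disjoint_def]
    intro w hwΔ hwΔm
    obtain ⟨h1, h2⟩ := hΔmP hwΔm
    have hw : w ∈ (Δ : Set (V × V)) := hwΔ
    rw [hΔ] at hw
    obtain ⟨u, hu⟩ := hw
    have hw2 : w.2 = 0 := by
      funext y
      by_cases hy : (y.2 : ℕ) = 0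
      · exact h2 y hy
      · rw [hu]
        simp only [Pi.add_apply, Pi.zero_apply, vecMul, dotProduct]
        have hA0 : (∑ x, w.1 x * A x y) = 0 := by
          apply Finset.sum_eq_zero
          intro x _
          rw [h1]
          exact mul_eq_zero.mpr (Or.inl rfl)
        have hB0 : (∑ i, u i * B i y) = 0 := by
          apply Finset.sum_eq_zero
          intro i _
          rw [hB, if_neg (by tauto), mul_zero]
        rw [hA0, hB0, add_zero]
    exact Prod.ext_iff.mpr ⟨h1, hw2⟩
  · -- codisjoint
    rw [codisjoint_iff, Submodule.eq_top_iff']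
    rintro ⟨X, Y⟩
    rw [Submodule.mem_sup]
    set u : Fin k → F := fun i => if h : 0 < d i then Y ⟨i, ⟨0, h⟩⟩ else 0 with hu
    set v : V := X ᵥ* A + u ᵥ* B with hv
    have h1 : ((X, v) : V × V) ∈ Δ := by
      have : ((X, v) : V × V) ∈ (Δ : Set (V × V)) := by
        rw [hΔ]; exact ⟨u, rfl⟩
      exact this
    have hZ : ∀ y : Σ i, Fin (d i), (y.2 : ℕ) = 0 → (Y - v) y = 0 := by
      rintro ⟨i, j⟩ hy
      have hd : 0 < d i := j.pos
      have hv' : v ⟨i, j⟩ = Y ⟨i, j⟩ := by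
        rw [hv]
        simp only [Pi.add_apply, vecMul, dotProduct]
        have hA0 : (∑ x, X x * A x ⟨i, j⟩) = 0 := by
          apply Finset.sum_eq_zero
          intro x _
          rw [hA, if_neg, mul_zero]
          rintro ⟨-, h⟩
          simp only at h hy
          omega
        have hB0 : (∑ l, u l * B l ⟨i, j⟩) = Y ⟨i, j⟩ := by
          rw [Finset.sum_eq_single i]
          · rw [hB, if_pos ⟨rfl, hy⟩, mul_one, hu]
            simp only [dif_pos hd]
            have hj : (⟨0, hd⟩ : Fin (d i)) = j := Fin.val_injective (by simpa using hy.symm)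
            rw [hj]
          · intro l _ hl
            rw [hB, if_neg (by tauto), mul_zero]
          · intro h
            exact absurd (Finset.mem_univ _) h
        rw [hA0, hB0, zero_add]
      rw [Pi.sub_apply, hv', sub_self]
    have h2 : ((0, Y - v) : V × V) ∈ Δm := by
      rw [hΔm]
      have hsum : ((0, Y - v) : V × V)
          = ∑ x : Σ i, Fin (d i), ((Y - v) x) • ((0, Pi.single x 1) : V × V) := by
        refine Prod.ext_iff.mpr ⟨?_, ?_⟩
        · rw [Prod.fst_sum]
          simp
        · rw [Prod.snd_sum]
          simp only [Prod.smul_snd]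
          have hterm : ∀ x : Σ i, Fin (d i),
              (Y - v) x • (Pi.single x 1 : V) = Pi.single x ((Y - v) x) := fun x => by
            funext y
            rw [Pi.smul_apply, Pi.single_apply, Pi.single_apply, smul_eq_mul, mul_ite,
              mul_one, mul_zero]
          simp only [hterm]
          exact (Finset.univ_sum_single (Y - v)).symm
      rw [hsum]
      apply Submodule.sum_mem
      intro x _
      by_cases hx : (x.2 : ℕ) = 0
      · rw [hZ x hx]
        simp
      · exact Submodule.smul_mem _ _ (Submodule.subset_span ⟨x, hx, rfl⟩)
    refine ⟨(X, v), h1, (0, Y - v), h2, ?_⟩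
    refine Prod.ext_iff.mpr ⟨by simp, by simp⟩
end

section
/- The map Φ: Δ → C_C / C_const, (X,Y) ↦ φ(X,Y) + C_const, where φ(X,Y) = XC + YB^tD, is a well-defined surjective F-linear map, and its kernel has dimension δ − r̂, where dim C_C = k + r̂ and dim Δ = δ + r. -/
open Matrix

/-- Let `(A,B,Cm,D)` be the controller canonical form of a minimal
encoder of an `(n,k,δ)` convolutional code with `r` nonzero Forney indices, let
`Δ = {(X, XA+uB)}` (of dimension `δ+r`), `C_C = im (Cm; D)` of dimension `k + r̂`,
`C_const = (ker B)·D` of dimension `k − r`, and `φ(X,Y) = X Cm + Y Bᵀ D`.  Then the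
map `Φ : Δ → C_C / C_const`, `(X,Y) ↦ φ(X,Y) + C_const`, is a well-defined surjective
`F`-linear map whose kernel `K = {(X,Y) ∈ Δ : φ(X,Y) ∈ C_const}` has dimension
`δ − r̂`. -/
theorem stmt_13 {k n r rhat : ℕ} {F : Type} [Field F] [Fintype F] [DecidableEq F]
    (G : Matrix (Fin k) (Fin n) (Polynomial F))
    (d : Fin k → ℕ)
    (hGdeg : ∀ i j, (G i j).natDegree ≤ d i)
    (hGbasic : ∃ G' : Matrix (Fin n) (Fin k) (Polynomial F), G * G' = 1)
    (hGmin : LinearIndependent F (fun i : Fin k => fun j : Fin n => (G i j).coeff (d i)))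
    (A : Matrix (Σ i, Fin (d i)) (Σ i, Fin (d i)) F)
    (B : Matrix (Fin k) (Σ i, Fin (d i)) F)
    (Cm : Matrix (Σ i, Fin (d i)) (Fin n) F)
    (D : Matrix (Fin k) (Fin n) F)
    (hA : ∀ x y, A x y = if x.1 = y.1 ∧ (x.2 : ℕ) + 1 = (y.2 : ℕ) then 1 else 0)
    (hB : ∀ i y, B i y = if i = y.1 ∧ (y.2 : ℕ) = 0 then 1 else 0)
    (hC : ∀ x j, Cm x j = (G x.1 j).coeff ((x.2 : ℕ) + 1))
    (hD : ∀ i j, D i j = (G i j).coeff 0)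
    (hr : r = (Finset.univ.filter fun i => 0 < d i).card)
    (Δ K : Submodule F (((Σ i, Fin (d i)) → F) × ((Σ i, Fin (d i)) → F)))
    (CCsub Ccon : Submodule F (Fin n → F))
    (hΔ : (Δ : Set (((Σ i, Fin (d i)) → F) × ((Σ i, Fin (d i)) → F)))
        = {w | ∃ u : Fin k → F, w.2 = w.1 ᵥ* A + u ᵥ* B})
    (hCCsub : (CCsub : Set (Fin n → F))
        = {v | ∃ (X : (Σ i, Fin (d i)) → F) (u : Fin k → F), v = X ᵥ* Cm + u ᵥ* D})
    (hCcon : (Ccon : Set (Fin n → F))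
        = {v | ∃ w : Fin k → F, w ᵥ* B = 0 ∧ v = w ᵥ* D})
    (hK : (K : Set (((Σ i, Fin (d i)) → F) × ((Σ i, Fin (d i)) → F)))
        = {w | (∃ u : Fin k → F, w.2 = w.1 ᵥ* A + u ᵥ* B) ∧
               w.1 ᵥ* Cm + (w.2 ᵥ* Bᵀ) ᵥ* D ∈ Ccon})
    (hCCrank : Module.finrank F CCsub = k + rhat)
    (hCconrank : Module.finrank F Ccon = k - r) :
    (∀ w ∈ Δ, w.1 ᵥ* Cm + (w.2 ᵥ* Bᵀ) ᵥ* D ∈ CCsub) ∧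
    (∀ c ∈ CCsub, ∃ w ∈ Δ, (w.1 ᵥ* Cm + (w.2 ᵥ* Bᵀ) ᵥ* D) - c ∈ Ccon) ∧
    Module.finrank F K = (∑ i, d i) - rhat := by
  classical
  -- pointwise description of vecMul with B
  have L1 : ∀ (u : Fin k → F) (y : Σ i, Fin (d i)),
      (u ᵥ* B) y = if (y.2 : ℕ) = 0 then u y.1 else 0 := by
    intro u y
    simp only [Matrix.vecMul, dotProduct, hB]
    by_cases h0 : (y.2 : ℕ) = 0
    · rw [if_pos h0, Finset.sum_eq_single y.1]
      · simp [h0]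
      · intro i _ hi; simp [hi]
      · simp
    · rw [if_neg h0]
      apply Finset.sum_eq_zero
      intro i _
      simp [h0]
  have L2 : ∀ (v : (Σ i, Fin (d i)) → F) (i : Fin k) (h : 0 < d i),
      (v ᵥ* Bᵀ) i = v ⟨i, ⟨0, h⟩⟩ := by
    intro v i h
    simp only [Matrix.vecMul, dotProduct, Matrix.transpose_apply, hB]
    rw [Finset.sum_eq_single (⟨i, ⟨0, h⟩⟩ : Σ i, Fin (d i))]
    · simp
    · rintro ⟨j, m⟩ _ hy
      by_cases hij : i = j
      · subst hij
        have hm : (m : ℕ) ≠ 0 := by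
          intro hm0
          exact hy (by ext : 1 <;> simp [Fin.ext_iff, hm0])
        simp [hm]
      · simp [hij]
    · simp
  have L3 : ∀ (X : (Σ i, Fin (d i)) → F) (y : Σ i, Fin (d i)),
      (y.2 : ℕ) = 0 → (X ᵥ* A) y = 0 := by
    intro X y hy
    simp only [Matrix.vecMul, dotProduct, hA]
    apply Finset.sum_eq_zero
    intro x _
    have : ¬ (x.1 = y.1 ∧ (x.2 : ℕ) + 1 = (y.2 : ℕ)) := by
      rintro ⟨-, h⟩; omega
    simp [this]
  have hkerB : ∀ u : Fin k → F, u ᵥ* B = 0 ↔ ∀ i, 0 < d i → u i = 0 := by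
    intro u
    constructor
    · intro h i hi
      have := congrFun h ⟨i, ⟨0, hi⟩⟩
      simpa [L1] using this
    · intro h
      funext y
      rw [L1]
      split
      · exact h y.1 y.2.pos
      · rfl
  -- part 1
  have part1 : ∀ w ∈ Δ, w.1 ᵥ* Cm + (w.2 ᵥ* Bᵀ) ᵥ* D ∈ CCsub := by
    intro w _
    rw [← SetLike.mem_coe, hCCsub]
    exact ⟨w.1, w.2 ᵥ* Bᵀ, rfl⟩
  -- part 2
  have part2 : ∀ c ∈ CCsub, ∃ w ∈ Δ, (w.1 ᵥ* Cm + (w.2 ᵥ* Bᵀ) ᵥ* D) - c ∈ Ccon := by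
    intro c hc
    rw [← SetLike.mem_coe, hCCsub] at hc
    obtain ⟨X, u, rfl⟩ := hc
    refine ⟨(X, X ᵥ* A + u ᵥ* B), ?_, ?_⟩
    · rw [← SetLike.mem_coe, hΔ]
      exact ⟨u, rfl⟩
    · rw [← SetLike.mem_coe, hCcon]
      refine ⟨((X ᵥ* A + u ᵥ* B) ᵥ* Bᵀ) - u, ?_, ?_⟩
      · funext y
        rw [Matrix.sub_vecMul]
        have key : ((X ᵥ* A + u ᵥ* B) ᵥ* Bᵀ) y.1 = u y.1 := by
          rw [L2 _ _ y.2.pos]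
          have e1 : (X ᵥ* A) ⟨y.1, ⟨0, y.2.pos⟩⟩ = 0 := L3 X _ rfl
          have e2 : (u ᵥ* B) ⟨y.1, ⟨0, y.2.pos⟩⟩ = u y.1 := by rw [L1]; rfl
          simp [e1, e2]
        simp only [Pi.sub_apply, L1, key]
        split <;> simp
      · rw [Matrix.sub_vecMul]
        abel
  refine ⟨part1, part2, ?_⟩
  -- part 3 : dimension count
  have hrk : r ≤ k := by
    rw [hr]
    simpa using (Finset.card_filter_le Finset.univ (fun i : Fin k => 0 < d i))
  have hcard : (Finset.univ.filter fun i : Fin k => d i = 0).card + r = k := by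
    rw [hr]
    have h := Finset.card_filter_add_card_filter_not
      (s := (Finset.univ : Finset (Fin k))) (p := fun i => d i = 0)
    have h2 : (Finset.univ.filter fun i : Fin k => ¬ d i = 0)
        = (Finset.univ.filter fun i : Fin k => 0 < d i) := by
      apply Finset.filter_congr
      intro i _
      simp [Nat.pos_iff_ne_zero]
    rw [h2] at h
    simpa using h
  -- linear maps
  set f : ((((Σ i, Fin (d i)) → F) × ((Σ i, Fin (d i)) → F))) →ₗ[F] (Fin n → F) :=
    (Matrix.vecMulLinear Cm).comp (LinearMap.fst F _ _) +
      (Matrix.vecMulLinear D).comp ((Matrix.vecMulLinear Bᵀ).comp (LinearMap.snd F _ _)) with hfdef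
  have hf : ∀ w, f w = w.1 ᵥ* Cm + (w.2 ᵥ* Bᵀ) ᵥ* D := fun w => rfl
  set g : (((Σ i, Fin (d i)) → F) × (Fin k → F)) →ₗ[F]
      (((Σ i, Fin (d i)) → F) × ((Σ i, Fin (d i)) → F)) :=
    LinearMap.prod (LinearMap.fst F _ _)
      ((Matrix.vecMulLinear A).comp (LinearMap.fst F _ _) +
        (Matrix.vecMulLinear B).comp (LinearMap.snd F _ _)) with hgdef
  have hg : ∀ w, g w = (w.1, w.1 ᵥ* A + w.2 ᵥ* B) := fun w => rfl
  have hΔrange : Δ = LinearMap.range g := by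
    ext w
    rw [← SetLike.mem_coe, hΔ, LinearMap.mem_range]
    constructor
    · rintro ⟨u, hu⟩
      exact ⟨(w.1, u), by rw [hg]; exact Prod.ext rfl hu.symm⟩
    · rintro ⟨x, rfl⟩
      exact ⟨x.2, rfl⟩
  -- kernel of g
  have hkg : ∀ w : ((Σ i, Fin (d i)) → F) × (Fin k → F),
      w ∈ LinearMap.ker g ↔ w.1 = 0 ∧ w.2 ᵥ* B = 0 := by
    intro w
    rw [LinearMap.mem_ker, hg, Prod.ext_iff]
    constructor
    · rintro ⟨h1, h2⟩
      refine ⟨h1, ?_⟩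
      rw [h1] at h2
      simpa using h2
    · rintro ⟨h1, h2⟩
      refine ⟨h1, ?_⟩
      rw [h1, h2]
      simp
  have e2 : LinearMap.ker g ≃ₗ[F] ({i : Fin k // d i = 0} → F) :=
    { toFun := fun w i => w.1.2 i.1
      map_add' := fun _ _ => rfl
      map_smul' := fun _ _ => rfl
      invFun := fun v => ⟨(0, fun i => if h : d i = 0 then v ⟨i, h⟩ else 0), by
        rw [hkg]
        refine ⟨rfl, ?_⟩
        rw [hkerB]
        intro i hi
        show (if h : d i = 0 then v ⟨i, h⟩ else 0) = 0
        rw [dif_neg (by omega)]⟩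
      left_inv := by
        rintro ⟨⟨X, u⟩, hw⟩
        rw [hkg] at hw
        obtain ⟨h1, h2⟩ := hw
        rw [hkerB] at h2
        apply Subtype.ext
        refine Prod.ext h1.symm ?_
        funext i
        by_cases hdi : d i = 0
        · simp [hdi]
        · simp only [dif_neg hdi]
          exact (h2 i (by omega)).symm
      right_inv := by
        intro v
        funext i
        simp [i.2] }
  have hkerg : Module.finrank F (LinearMap.ker g) = k - r := by
    rw [e2.finrank_eq, Module.finrank_pi, Fintype.card_subtype]
    omega
  have rn1 := LinearMap.finrank_range_add_finrank_ker g
  have hdom : Module.finrank F (((Σ i, Fin (d i)) → F) × (Fin k → F)) = (∑ i, d i) + k := by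
    rw [Module.finrank_prod, Module.finrank_pi, Module.finrank_pi, Fintype.card_sigma]
    simp
  rw [hdom, hkerg, ← hΔrange] at rn1
  -- Ccon ≤ CCsub
  have hle : Ccon ≤ CCsub := by
    intro v hv
    rw [← SetLike.mem_coe, hCcon] at hv
    obtain ⟨w, -, rfl⟩ := hv
    rw [← SetLike.mem_coe, hCCsub]
    exact ⟨0, w, by simp⟩
  -- quotient map computations
  set Φ : Δ →ₗ[F] ((Fin n → F) ⧸ Ccon) := (Ccon.mkQ.comp f).comp Δ.subtype with hΦdef
  have hrange : LinearMap.range Φ = CCsub.map Ccon.mkQ := by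
    rw [hΦdef, LinearMap.range_comp, Submodule.range_subtype, Submodule.map_comp]
    apply le_antisymm
    · apply Submodule.map_mono
      rintro _ ⟨w, hw, rfl⟩
      rw [hf]
      exact part1 w hw
    · rintro _ ⟨c, hc, rfl⟩
      obtain ⟨w, hw, hwc⟩ := part2 c hc
      refine ⟨f w, ⟨w, hw, rfl⟩, ?_⟩
      rw [Submodule.mkQ_apply, Submodule.mkQ_apply, Submodule.Quotient.eq]
      rw [hf]
      exact hwc
  have hKmap : K = (LinearMap.ker Φ).map Δ.subtype := by
    ext w
    rw [← SetLike.mem_coe, hK]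
    simp only [Set.mem_setOf_eq, Submodule.mem_map, LinearMap.mem_ker]
    constructor
    · rintro ⟨hmem, hcon⟩
      have hwΔ : w ∈ Δ := by rw [← SetLike.mem_coe, hΔ]; exact hmem
      refine ⟨⟨w, hwΔ⟩, ?_, rfl⟩
      show Ccon.mkQ (f w) = 0
      rw [Submodule.mkQ_apply, Submodule.Quotient.mk_eq_zero, hf]
      exact hcon
    · rintro ⟨⟨w, hwΔ⟩, hker, rfl⟩
      have h1 : Ccon.mkQ (f w) = 0 := hker
      rw [Submodule.mkQ_apply, Submodule.Quotient.mk_eq_zero, hf] at h1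
      refine ⟨?_, h1⟩
      rw [← SetLike.mem_coe, hΔ] at hwΔ
      exact hwΔ
  have hKfin : Module.finrank F K = Module.finrank F (LinearMap.ker Φ) := by
    rw [hKmap]
    set_option synthInstance.maxHeartbeats 1000000 in
    exact (Submodule.equivMapOfInjective Δ.subtype (Submodule.injective_subtype Δ)
      (LinearMap.ker Φ)).finrank_eq.symm
  set ψ : CCsub →ₗ[F] ((Fin n → F) ⧸ Ccon) := Ccon.mkQ.comp CCsub.subtype with hψdef
  have hψrange : LinearMap.range ψ = CCsub.map Ccon.mkQ := by
    rw [hψdef, LinearMap.range_comp, Submodule.range_subtype]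
  have hψker : Module.finrank F (LinearMap.ker ψ) = k - r := by
    have hk : LinearMap.ker ψ = Ccon.comap CCsub.subtype := by
      rw [hψdef, LinearMap.ker_comp, Submodule.ker_mkQ]
    rw [hk, ← hCconrank]
    set_option synthInstance.maxHeartbeats 1000000 in
    exact (Submodule.comapSubtypeEquivOfLe hle).finrank_eq
  have rn3 := by
    set_option synthInstance.maxHeartbeats 1000000 in
    exact LinearMap.finrank_range_add_finrank_ker ψ
  rw [hψrange, hψker, hCCrank] at rn3
  have rn2 := by
    set_option synthInstance.maxHeartbeats 1000000 in
    exact LinearMap.finrank_range_add_finrank_ker Φ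
  rw [hrange, ← hKfin] at rn2
  -- rn1 : finrank Δ + (k - r) = (∑ d i) + k
  -- rn3 : finrank (CCsub.map mkQ) + (k - r) = k + rhat
  -- rn2 : finrank (CCsub.map mkQ) + finrank K = finrank Δ
  omega
end

section
/- Let Λ = (λ_{X,Y}) be the adjacency matrix of a minimal encoder of an (n,k,δ) convolutional code C, and let Δ* be any direct complement of ker Φ in Δ. Then Σ_{(X,Y) ∈ Δ*} λ_{X,Y} = we(C_C) and Σ_{(X,Y) ∈ F^δ × F^δ} λ_{X,Y} = q^{δ − r̂} we(C_C). -/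
open Matrix

open Classical in
/-- The (Hamming) weight enumerator of a subset `S ⊆ F^n`. -/
noncomputable def we {n : ℕ} {F : Type} [Fintype F] [DecidableEq F] [Zero F]
    (S : Set (Fin n → F)) : Polynomial ℂ :=
  ∑ a : Fin n → F, if a ∈ S then Polynomial.X ^ hammingNorm a else 0

/-!
For an edge `(X, Y)` of the state diagram the output labels `{X C + u D : Y = X A + u B}` form
the coset `Φ (X, Y) + C_const`, where `Φ (X, Y) = X C + (Y Bᵀ) D`: in controller canonical form
`Bᵀ` reads the input off the next state up to `ker B`. A complement `Δ*` of `K = ker Φ` in `Δ`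
is mapped bijectively onto `C_C / C_const`, so the cosets indexed by `Δ*` partition `C_C` and
their weight enumerators add up to `we C_C`. Every edge is `s + t` with `s ∈ Δ*`, `t ∈ K` and
`λ (s + t) = λ s`, so the sum over all pairs is `|K| • we C_C`, and counting dimensions gives
`dim K = dim Δ - (dim C_C - dim C_const) = (δ + r) - (r̂ + r) = δ - r̂`.
-/

open Polynomial Function Module Finset

section WeightEnumerator

variable {n : ℕ} {R : Type} [Fintype R] [DecidableEq R]

theorem we_empty [Zero R] : we (∅ : Set (Fin n → R)) = 0 := by
  simp [we]

theorem we_range [Zero R] {ι : Type*} [Fintype ι] {f : ι → Fin n → R} (hf : Injective f) :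
    we (Set.range f) = ∑ i, X ^ hammingNorm (f i) := by
  unfold we
  refine (Fintype.sum_of_injective f hf _ _ (fun a ha => ?_) fun i => ?_).symm
  · exact if_neg ha
  · exact (if_pos ⟨i, rfl⟩).symm

theorem we_coset [Ring R] (C₀ : Submodule R (Fin n → R)) [Fintype C₀] (x : Fin n → R) :
    we {v | v - x ∈ C₀} = ∑ c : C₀, X ^ hammingNorm (x + (c : Fin n → R)) := by
  have hrange : {v | v - x ∈ C₀} = Set.range fun c : C₀ => x + (c : Fin n → R) := by
    ext v
    exact ⟨fun hv => ⟨⟨v - x, hv⟩, add_sub_cancel x v⟩, by rintro ⟨c, rfl⟩; simp⟩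
  rw [hrange]
  exact we_range ((add_right_injective x).comp Subtype.val_injective)

end WeightEnumerator

section CosetPartition

variable {n : ℕ} {R : Type} [Ring R] {W : Type*} [AddCommGroup W] [Module R W]
  {Φ : W →ₗ[R] Fin n → R} {Δ K S : Submodule R W} {C₀ : Submodule R (Fin n → R)}

theorem injective_coprod_of_inf_comap_eq_bot (hS : S ⊓ C₀.comap Φ = ⊥) :
    Injective ((Φ ∘ₗ S.subtype).coprod C₀.subtype) := by
  refine (injective_iff_map_eq_zero _).2 fun ⟨s, c⟩ h => ?_
  have hΦs : Φ s = -c := eq_neg_of_add_eq_zero_left h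
  have hs : (s : W) ∈ S ⊓ C₀.comap Φ := ⟨s.2, by simp [hΦs]⟩
  rw [hS, Submodule.mem_bot, ZeroMemClass.coe_eq_zero] at hs
  subst hs
  simpa using h

theorem range_coprod_comp_subtype (Φ : W →ₗ[R] Fin n → R) (S : Submodule R W)
    (C₀ : Submodule R (Fin n → R)) :
    LinearMap.range ((Φ ∘ₗ S.subtype).coprod C₀.subtype) = S.map Φ ⊔ C₀ := by
  rw [LinearMap.range_coprod, LinearMap.range_comp, Submodule.range_subtype,
    Submodule.range_subtype]

theorem inf_comap_eq_bot_of_inf_eq_bot (hK : K = Δ ⊓ C₀.comap Φ) (h₁ : S ⊓ K = ⊥)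
    (h₂ : S ⊔ K = Δ) : S ⊓ C₀.comap Φ = ⊥ := by
  have hSΔ : S ≤ Δ := h₂ ▸ le_sup_left
  rw [← h₁, hK, ← inf_assoc, inf_eq_left.2 hSΔ]

theorem map_sup_eq_map_sup_of_sup_eq (hK : K = Δ ⊓ C₀.comap Φ) (h₂ : S ⊔ K = Δ) :
    Δ.map Φ ⊔ C₀ = S.map Φ ⊔ C₀ := by
  have hKΦ : K.map Φ ≤ C₀ := Submodule.map_le_iff_le_comap.2 (hK ▸ inf_le_right)
  rw [← h₂, Submodule.map_sup, sup_assoc, sup_eq_right.2 hKΦ]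

theorem sum_eq_card_smul_sum_of_inf_eq_bot {N : Type*} [AddCommMonoid N] [Fintype W]
    [Fintype S] [Fintype K] (hSK : S ⊓ K = ⊥) (g : W → N) (hg₀ : ∀ w ∉ S ⊔ K, g w = 0)
    (hg : ∀ s ∈ S, ∀ t ∈ K, g (s + t) = g s) :
    ∑ w, g w = Fintype.card K • ∑ s : S, g s := by
  have hinj : Injective (S.subtype.coprod K.subtype) := by
    rw [← LinearMap.ker_eq_bot, LinearMap.ker_coprod_of_disjoint_range, Submodule.ker_subtype,
      Submodule.ker_subtype, Submodule.prod_bot]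
    simpa [disjoint_iff] using hSK
  have hrange : LinearMap.range (S.subtype.coprod K.subtype) = S ⊔ K := by
    rw [LinearMap.range_coprod, Submodule.range_subtype, Submodule.range_subtype]
  rw [← Fintype.sum_of_injective _ hinj (fun p => g (p.1 + p.2)) g
    (fun w hw => hg₀ w (by rwa [← hrange])) fun _ => rfl, Fintype.sum_prod_type,
    Finset.smul_sum]
  refine Finset.sum_congr rfl fun s _ => ?_
  simp [hg s s.2 _ (Subtype.mem _)]

variable [Fintype R] [DecidableEq R]

theorem sum_we_coset_eq_we_map_sup [Fintype S] [Fintype C₀] (hS : S ⊓ C₀.comap Φ = ⊥) :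
    ∑ s : S, we {v | v - Φ s ∈ C₀} = we ((S.map Φ ⊔ C₀ : Submodule R _) : Set (Fin n → R)) := by
  rw [← range_coprod_comp_subtype, LinearMap.coe_range,
    we_range (injective_coprod_of_inf_comap_eq_bot hS), Fintype.sum_prod_type]
  simp_rw [we_coset]
  rfl

theorem sum_we_coset_of_inf_eq_bot [Fintype S] [Fintype C₀] (lam : W → ℂ[X])
    (hlam : ∀ w ∈ Δ, lam w = we {v | v - Φ w ∈ C₀}) (hK : K = Δ ⊓ C₀.comap Φ)
    (h₁ : S ⊓ K = ⊥) (h₂ : S ⊔ K = Δ) :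
    ∑ s : S, lam s = we ((Δ.map Φ ⊔ C₀ : Submodule R _) : Set (Fin n → R)) := by
  rw [map_sup_eq_map_sup_of_sup_eq hK h₂,
    ← sum_we_coset_eq_we_map_sup (inf_comap_eq_bot_of_inf_eq_bot hK h₁ h₂)]
  exact Finset.sum_congr rfl fun s _ => hlam s (h₂ ▸ Submodule.mem_sup_left s.2)

theorem sum_eq_card_smul_we_of_inf_eq_bot [Fintype W] [Fintype S] [Fintype K] [Fintype C₀]
    (lam : W → ℂ[X]) (hlam : ∀ w ∈ Δ, lam w = we {v | v - Φ w ∈ C₀})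
    (hlam₀ : ∀ w ∉ Δ, lam w = 0) (hK : K = Δ ⊓ C₀.comap Φ) (h₁ : S ⊓ K = ⊥) (h₂ : S ⊔ K = Δ) :
    ∑ w, lam w = Fintype.card K • we ((Δ.map Φ ⊔ C₀ : Submodule R _) : Set (Fin n → R)) := by
  rw [← sum_we_coset_of_inf_eq_bot lam hlam hK h₁ h₂]
  refine sum_eq_card_smul_sum_of_inf_eq_bot h₁ lam (h₂ ▸ hlam₀) fun s hs t ht => ?_
  have hΦt : Φ t ∈ C₀ := (hK ▸ ht).2
  rw [hlam _ (h₂ ▸ add_mem (Submodule.mem_sup_left hs) (Submodule.mem_sup_right ht)),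
    hlam _ (h₂ ▸ Submodule.mem_sup_left hs), map_add]
  simp_rw [sub_add_eq_sub_sub, Submodule.sub_mem_iff_left C₀ hΦt]

end CosetPartition

section CosetDimension

variable {n : ℕ} {F : Type} [DivisionRing F] {W : Type*} [AddCommGroup W] [Module F W]
  [FiniteDimensional F W] {Φ : W →ₗ[F] Fin n → F} {Δ K S : Submodule F W}
  {C₀ : Submodule F (Fin n → F)}

theorem finrank_map_sup_eq_add (hS : S ⊓ C₀.comap Φ = ⊥) :
    finrank F (S.map Φ ⊔ C₀ : Submodule F _) = finrank F S + finrank F C₀ := by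
  rw [← range_coprod_comp_subtype, LinearMap.finrank_range_of_inj
    (injective_coprod_of_inf_comap_eq_bot hS), finrank_prod]

theorem finrank_add_finrank_map_sup (hK : K = Δ ⊓ C₀.comap Φ) (h₁ : S ⊓ K = ⊥)
    (h₂ : S ⊔ K = Δ) :
    finrank F K + finrank F (Δ.map Φ ⊔ C₀ : Submodule F _) = finrank F Δ + finrank F C₀ := by
  have hΔ := Submodule.finrank_sup_add_finrank_inf_eq S K
  rw [h₁, h₂, finrank_bot] at hΔ
  rw [map_sup_eq_map_sup_of_sup_eq hK h₂,
    finrank_map_sup_eq_add (inf_comap_eq_bot_of_inf_eq_bot hK h₁ h₂)]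
  omega

end CosetDimension

section StateSpace

variable {σ ι m F : Type*} [Fintype σ] [Fintype ι] [Field F]
  {A : Matrix σ σ F} {B : Matrix ι σ F} (C : Matrix σ m F) (D : Matrix ι m F)

theorem fiber_eq_coset {X Y : σ → F} {u₀ : ι → F} (hu₀ : Y = X ᵥ* A + u₀ ᵥ* B) :
    {v | ∃ u, Y = X ᵥ* A + u ᵥ* B ∧ v = X ᵥ* C + u ᵥ* D} =
      {v | v - (X ᵥ* C + u₀ ᵥ* D) ∈ (LinearMap.ker B.vecMulLinear).map D.vecMulLinear} := by
  ext v
  simp only [Set.mem_ofPred_eq, Submodule.mem_map, LinearMap.mem_ker, vecMulLinear_apply]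
  constructor
  · rintro ⟨u, hu, rfl⟩
    refine ⟨u - u₀, ?_, ?_⟩
    · rw [sub_vecMul, sub_eq_zero]
      exact add_left_cancel (hu.symm.trans hu₀)
    · rw [sub_vecMul]
      abel
  · rintro ⟨c, hc, hcv⟩
    refine ⟨u₀ + c, by rw [add_vecMul, hc, add_zero, hu₀], ?_⟩
    rw [add_vecMul, hcv]
    abel

/-- The paper's `Φ` is `edgeLabel C D Bᵀ`; in general `P` should recover the input class from
the next state. -/
def edgeLabel (P : Matrix σ ι F) : (σ → F) × (σ → F) →ₗ[F] m → F :=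
  C.vecMulLinear.coprod (P * D).vecMulLinear

theorem edgeLabel_apply (P : Matrix σ ι F) (w : (σ → F) × (σ → F)) :
    edgeLabel C D P w = w.1 ᵥ* C + w.2 ᵥ* P ᵥ* D := by
  simp [edgeLabel, vecMul_vecMul]

variable {C D} {P : Matrix σ ι F}

theorem fiber_eq_edgeLabel_coset (hP : ∀ X u, (X ᵥ* A + u ᵥ* B) ᵥ* P ᵥ* B = u ᵥ* B)
    {w : (σ → F) × (σ → F)} (hw : ∃ u, w.2 = w.1 ᵥ* A + u ᵥ* B) :
    {v | ∃ u, w.2 = w.1 ᵥ* A + u ᵥ* B ∧ v = w.1 ᵥ* C + u ᵥ* D} =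
      {v | v - edgeLabel C D P w ∈ (LinearMap.ker B.vecMulLinear).map D.vecMulLinear} := by
  obtain ⟨u, hu⟩ := hw
  rw [edgeLabel_apply, fiber_eq_coset C D (u₀ := w.2 ᵥ* P)]
  rw [hu, hP, ← hu]

theorem eq_map_edgeLabel_sup (hP : ∀ X u, (X ᵥ* A + u ᵥ* B) ᵥ* P ᵥ* B = u ᵥ* B)
    (Δ : Submodule F ((σ → F) × (σ → F))) (CC : Submodule F (m → F))
    (hΔ : (Δ : Set ((σ → F) × (σ → F))) = {w | ∃ u, w.2 = w.1 ᵥ* A + u ᵥ* B})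
    (hCC : (CC : Set (m → F)) = {v | ∃ X u, v = X ᵥ* C + u ᵥ* D}) :
    CC = Δ.map (edgeLabel C D P) ⊔ (LinearMap.ker B.vecMulLinear).map D.vecMulLinear := by
  have hmemΔ : ∀ w, w ∈ Δ ↔ ∃ u, w.2 = w.1 ᵥ* A + u ᵥ* B := fun w => by
    rw [← SetLike.mem_coe, hΔ]; rfl
  have hmemCC : ∀ v, v ∈ CC ↔ ∃ X u, v = X ᵥ* C + u ᵥ* D := fun v => by
    rw [← SetLike.mem_coe, hCC]; rfl
  apply le_antisymm
  · intro v hv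
    obtain ⟨X, u, rfl⟩ := (hmemCC v).1 hv
    set w : (σ → F) × (σ → F) := (X, X ᵥ* A + u ᵥ* B)
    refine Submodule.mem_sup.2 ⟨edgeLabel C D P w, ⟨w, (hmemΔ w).2 ⟨u, rfl⟩, rfl⟩,
      (u - w.2 ᵥ* P) ᵥ* D, ⟨u - w.2 ᵥ* P, ?_, rfl⟩, ?_⟩
    · rw [SetLike.mem_coe, LinearMap.mem_ker, vecMulLinear_apply, sub_vecMul, hP, sub_self]
    · rw [edgeLabel_apply, sub_vecMul]
      abel
  · refine sup_le (Submodule.map_le_iff_le_comap.2 fun w _ => ?_) ?_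
    · exact (hmemCC _).2 ⟨w.1, w.2 ᵥ* P, edgeLabel_apply C D P w⟩
    · rintro _ ⟨c, -, rfl⟩
      exact (hmemCC _).2 ⟨0, c, by simp⟩

end StateSpace

section ControllerForm

variable {ι F : Type*} [Fintype ι] [DecidableEq ι] [Field F] {d : ι → ℕ}

def IsControllerShift (A : Matrix (Σ i, Fin (d i)) (Σ i, Fin (d i)) F) : Prop :=
  ∀ x y, A x y = if x.1 = y.1 ∧ (x.2 : ℕ) + 1 = (y.2 : ℕ) then 1 else 0

def IsControllerInput (B : Matrix ι (Σ i, Fin (d i)) F) : Prop :=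
  ∀ i y, B i y = if i = y.1 ∧ (y.2 : ℕ) = 0 then 1 else 0

variable {A : Matrix (Σ i, Fin (d i)) (Σ i, Fin (d i)) F} {B : Matrix ι (Σ i, Fin (d i)) F}

theorem IsControllerInput.vecMul_apply (hB : IsControllerInput B) (u : ι → F)
    (y : Σ i, Fin (d i)) : (u ᵥ* B) y = if (y.2 : ℕ) = 0 then u y.1 else 0 := by
  by_cases hy : (y.2 : ℕ) = 0 <;> simp [vecMul, dotProduct, hB _ _, hy]

theorem IsControllerShift.vecMul_apply_of_val_eq_zero (hA : IsControllerShift A)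
    (X : (Σ i, Fin (d i)) → F) {y : Σ i, Fin (d i)} (hy : (y.2 : ℕ) = 0) : (X ᵥ* A) y = 0 := by
  simp [vecMul, dotProduct, hA _ _, hy]

theorem IsControllerInput.transpose_mul_self (hB : IsControllerInput B) :
    Bᵀ * B = diagonal fun y => if (y.2 : ℕ) = 0 then 1 else 0 := by
  ext ⟨i, s⟩ ⟨j, t⟩
  simp only [mul_apply, transpose_apply, hB _ _, diagonal_apply]
  by_cases hij : i = j
  · subst hij
    by_cases hs : (s : ℕ) = 0 <;> by_cases ht : (t : ℕ) = 0 <;> simp [hs, ht, Fin.ext_iff]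
    omega
  · refine (Finset.sum_eq_zero fun x _ => ?_).trans (if_neg (by simp [hij])).symm
    grind

theorem vecMul_transpose_vecMul_of_controller (hA : IsControllerShift A)
    (hB : IsControllerInput B) (X : (Σ i, Fin (d i)) → F) (u : ι → F) :
    (X ᵥ* A + u ᵥ* B) ᵥ* Bᵀ ᵥ* B = u ᵥ* B := by
  ext y
  rw [vecMul_vecMul, hB.transpose_mul_self, vecMul_diagonal, hB.vecMul_apply]
  by_cases hy : (y.2 : ℕ) = 0
  · simp [hy, hA.vecMul_apply_of_val_eq_zero X hy, hB.vecMul_apply]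
  · simp [hy]

theorem IsControllerInput.vecMul_eq_zero_iff (hB : IsControllerInput B) (u : ι → F) :
    u ᵥ* B = 0 ↔ ∀ i, 0 < d i → u i = 0 := by
  refine ⟨fun hu i hi => ?_, fun hu => funext fun y => ?_⟩
  · simpa [hB.vecMul_apply] using congrFun hu ⟨i, ⟨0, hi⟩⟩
  · rw [hB.vecMul_apply]
    split_ifs
    · exact hu y.1 (Fin.pos y.2)
    · rfl

theorem IsControllerInput.finrank_transitions (hB : IsControllerInput B)
    (Δ : Submodule F (((Σ i, Fin (d i)) → F) × ((Σ i, Fin (d i)) → F)))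
    (hΔ : (Δ : Set (((Σ i, Fin (d i)) → F) × ((Σ i, Fin (d i)) → F)))
        = {w | ∃ u : ι → F, w.2 = w.1 ᵥ* A + u ᵥ* B}) :
    finrank F Δ = ∑ i, d i + #{i | 0 < d i} := by
  set μ := (LinearMap.fst F _ (ι → F)).prod (A.vecMulLinear.coprod B.vecMulLinear)
  set ν := (LinearMap.id (R := F) (M := (Σ i, Fin (d i)) → F)).prodMap
    (LinearMap.funLeft F F (Subtype.val : {i // 0 < d i} → ι))
  have hΔμ : Δ = LinearMap.range μ := by
    refine SetLike.coe_injective (hΔ.trans ?_)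
    ext ⟨X, Y⟩
    simp [μ, eq_comm]
  -- `μ` parametrises `Δ`, and its kernel `{0} × ker B` is also the kernel of the surjection `ν`
  have hker : LinearMap.ker μ = LinearMap.ker ν := by
    ext ⟨X, u⟩
    change (X, X ᵥ* A + u ᵥ* B) = 0 ↔ (X, fun i : {i // 0 < d i} => u i) = 0
    simp only [Prod.mk_eq_zero, and_congr_right_iff]
    rintro rfl
    rw [zero_vecMul, zero_add, hB.vecMul_eq_zero_iff, funext_iff]
    simp
  have hν : LinearMap.range ν = ⊤ := LinearMap.range_eq_top.2 <|
    surjective_id.prodMap (LinearMap.funLeft_surjective_of_injective F F _ Subtype.val_injective)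
  have hμ := LinearMap.finrank_range_add_finrank_ker μ
  have hrankν := LinearMap.finrank_range_add_finrank_ker ν
  rw [hker] at hμ
  rw [hν, finrank_top, finrank_prod, finrank_fintype_fun_eq_card,
    finrank_fintype_fun_eq_card, Fintype.card_subtype] at hrankν
  simp only [Fintype.card_sigma, Fintype.card_fin, finrank_prod,
    finrank_fintype_fun_eq_card] at hrankν hμ
  rw [hΔμ]
  omega

end ControllerForm

open Classical in
theorem stmt_14_general {k n r rhat : ℕ} {F : Type} [Field F] [Fintype F] [DecidableEq F]
    (d : Fin k → ℕ)
    (A : Matrix (Σ i, Fin (d i)) (Σ i, Fin (d i)) F)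
    (B : Matrix (Fin k) (Σ i, Fin (d i)) F)
    (Cm : Matrix (Σ i, Fin (d i)) (Fin n) F)
    (D : Matrix (Fin k) (Fin n) F)
    (hA : ∀ x y, A x y = if x.1 = y.1 ∧ (x.2 : ℕ) + 1 = (y.2 : ℕ) then 1 else 0)
    (hB : ∀ i y, B i y = if i = y.1 ∧ (y.2 : ℕ) = 0 then 1 else 0)
    (hr : r = (Finset.univ.filter fun i => 0 < d i).card)
    (lam : (((Σ i, Fin (d i)) → F) × ((Σ i, Fin (d i)) → F)) → Polynomial ℂ)
    (hlam : ∀ w, lam w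
      = we {v | ∃ u : Fin k → F, w.2 = w.1 ᵥ* A + u ᵥ* B ∧ v = w.1 ᵥ* Cm + u ᵥ* D})
    (Δ K Δstar : Submodule F (((Σ i, Fin (d i)) → F) × ((Σ i, Fin (d i)) → F)))
    (CCsub Ccon : Submodule F (Fin n → F))
    (hΔ : (Δ : Set (((Σ i, Fin (d i)) → F) × ((Σ i, Fin (d i)) → F)))
        = {w | ∃ u : Fin k → F, w.2 = w.1 ᵥ* A + u ᵥ* B})
    (hCCsub : (CCsub : Set (Fin n → F))
        = {v | ∃ (X : (Σ i, Fin (d i)) → F) (u : Fin k → F), v = X ᵥ* Cm + u ᵥ* D})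
    (hCcon : (Ccon : Set (Fin n → F))
        = {v | ∃ w : Fin k → F, w ᵥ* B = 0 ∧ v = w ᵥ* D})
    (hK : (K : Set (((Σ i, Fin (d i)) → F) × ((Σ i, Fin (d i)) → F)))
        = {w | (∃ u : Fin k → F, w.2 = w.1 ᵥ* A + u ᵥ* B) ∧
               w.1 ᵥ* Cm + (w.2 ᵥ* Bᵀ) ᵥ* D ∈ Ccon})
    (hCCrank : Module.finrank F CCsub = k + rhat)
    (hCconrank : Module.finrank F Ccon = k - r)
    (hstar1 : Δstar ⊓ K = ⊥) (hstar2 : Δstar ⊔ K = Δ) :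
    (∑ w : ((Σ i, Fin (d i)) → F) × ((Σ i, Fin (d i)) → F),
        if w ∈ Δstar then lam w else 0) = we (CCsub : Set (Fin n → F)) ∧
    (∑ w : ((Σ i, Fin (d i)) → F) × ((Σ i, Fin (d i)) → F), lam w)
      = Polynomial.C ((Fintype.card F : ℂ) ^ ((∑ i, d i) - rhat))
          * we (CCsub : Set (Fin n → F)) := by
  have hP := vecMul_transpose_vecMul_of_controller hA hB
  have hCconeq : (LinearMap.ker B.vecMulLinear).map D.vecMulLinear = Ccon :=
    SetLike.coe_injective (hCcon.trans (by ext; simp [eq_comm])).symm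
  have hCCeq := hCconeq ▸ eq_map_edgeLabel_sup hP Δ CCsub hΔ hCCsub
  have hmemΔ : ∀ w, w ∈ Δ ↔ ∃ u, w.2 = w.1 ᵥ* A + u ᵥ* B := fun w => by
    rw [← SetLike.mem_coe, hΔ]; rfl
  have hlamΔ : ∀ w ∈ Δ, lam w = we {v | v - edgeLabel Cm D Bᵀ w ∈ Ccon} := fun w hw => by
    rw [hlam, fiber_eq_edgeLabel_coset hP ((hmemΔ w).1 hw), hCconeq]
  have hlam₀ : ∀ w ∉ Δ, lam w = 0 := fun w hw => by
    have hempty : {v | ∃ u, w.2 = w.1 ᵥ* A + u ᵥ* B ∧ v = w.1 ᵥ* Cm + u ᵥ* D} = ∅ :=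
      Set.eq_empty_of_forall_notMem fun _ ⟨u, hu, _⟩ => hw ((hmemΔ w).2 ⟨u, hu⟩)
    rw [hlam, hempty, we_empty]
  have hKeq : K = Δ ⊓ Ccon.comap (edgeLabel Cm D Bᵀ) :=
    SetLike.coe_injective <| hK.trans <| by ext w; simp [hΔ, edgeLabel_apply]
  have hfinrankK : Module.finrank F K = ∑ i, d i - rhat := by
    have hdim := finrank_add_finrank_map_sup hKeq hstar1 hstar2
    rw [← hCCeq, hCCrank, hCconrank, IsControllerInput.finrank_transitions hB Δ hΔ, ← hr] at hdim
    have hrk : r ≤ k := hr ▸ (Finset.card_filter_le _ _).trans (Finset.card_fin k).le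
    omega
  subst hCCeq
  refine ⟨?_, ?_⟩
  · rw [← Finset.sum_filter, Finset.sum_subtype _ (p := (· ∈ Δstar)) (by simp)]
    exact sum_we_coset_of_inf_eq_bot lam hlamΔ hKeq hstar1 hstar2
  · rw [sum_eq_card_smul_we_of_inf_eq_bot lam hlamΔ hlam₀ hKeq hstar1 hstar2,
      Module.card_eq_pow_finrank (K := F), hfinrankK, nsmul_eq_mul]
    simp

open Classical in
/-- Let `Λ = (λ_{X,Y})` be the adjacency matrix of a minimal encoder
of an `(n,k,δ)` convolutional code (entries `λ_{X,Y} = we({X Cm + u D : Y = XA + uB})`,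
zero for disconnected pairs), and let `Δ*` be any direct complement of `ker Φ` in `Δ`.
Then `∑_{(X,Y) ∈ Δ*} λ_{X,Y} = we(C_C)` and
`∑_{(X,Y) ∈ F^δ × F^δ} λ_{X,Y} = q^{δ − r̂} we(C_C)`. -/
theorem stmt_14 {k n r rhat : ℕ} {F : Type} [Field F] [Fintype F] [DecidableEq F]
    (G : Matrix (Fin k) (Fin n) (Polynomial F))
    (d : Fin k → ℕ)
    (hGdeg : ∀ i j, (G i j).natDegree ≤ d i)
    (hGbasic : ∃ G' : Matrix (Fin n) (Fin k) (Polynomial F), G * G' = 1)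
    (hGmin : LinearIndependent F (fun i : Fin k => fun j : Fin n => (G i j).coeff (d i)))
    (A : Matrix (Σ i, Fin (d i)) (Σ i, Fin (d i)) F)
    (B : Matrix (Fin k) (Σ i, Fin (d i)) F)
    (Cm : Matrix (Σ i, Fin (d i)) (Fin n) F)
    (D : Matrix (Fin k) (Fin n) F)
    (hA : ∀ x y, A x y = if x.1 = y.1 ∧ (x.2 : ℕ) + 1 = (y.2 : ℕ) then 1 else 0)
    (hB : ∀ i y, B i y = if i = y.1 ∧ (y.2 : ℕ) = 0 then 1 else 0)
    (hC : ∀ x j, Cm x j = (G x.1 j).coeff ((x.2 : ℕ) + 1))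
    (hD : ∀ i j, D i j = (G i j).coeff 0)
    (hr : r = (Finset.univ.filter fun i => 0 < d i).card)
    (lam : (((Σ i, Fin (d i)) → F) × ((Σ i, Fin (d i)) → F)) → Polynomial ℂ)
    (hlam : ∀ w, lam w
      = we {v | ∃ u : Fin k → F, w.2 = w.1 ᵥ* A + u ᵥ* B ∧ v = w.1 ᵥ* Cm + u ᵥ* D})
    (Δ K Δstar : Submodule F (((Σ i, Fin (d i)) → F) × ((Σ i, Fin (d i)) → F)))
    (CCsub Ccon : Submodule F (Fin n → F))
    (hΔ : (Δ : Set (((Σ i, Fin (d i)) → F) × ((Σ i, Fin (d i)) → F)))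
        = {w | ∃ u : Fin k → F, w.2 = w.1 ᵥ* A + u ᵥ* B})
    (hCCsub : (CCsub : Set (Fin n → F))
        = {v | ∃ (X : (Σ i, Fin (d i)) → F) (u : Fin k → F), v = X ᵥ* Cm + u ᵥ* D})
    (hCcon : (Ccon : Set (Fin n → F))
        = {v | ∃ w : Fin k → F, w ᵥ* B = 0 ∧ v = w ᵥ* D})
    (hK : (K : Set (((Σ i, Fin (d i)) → F) × ((Σ i, Fin (d i)) → F)))
        = {w | (∃ u : Fin k → F, w.2 = w.1 ᵥ* A + u ᵥ* B) ∧
               w.1 ᵥ* Cm + (w.2 ᵥ* Bᵀ) ᵥ* D ∈ Ccon})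
    (hCCrank : Module.finrank F CCsub = k + rhat)
    (hCconrank : Module.finrank F Ccon = k - r)
    (hstar1 : Δstar ⊓ K = ⊥) (hstar2 : Δstar ⊔ K = Δ) :
    (∑ w : ((Σ i, Fin (d i)) → F) × ((Σ i, Fin (d i)) → F),
        if w ∈ Δstar then lam w else 0) = we (CCsub : Set (Fin n → F)) ∧
    (∑ w : ((Σ i, Fin (d i)) → F) × ((Σ i, Fin (d i)) → F), lam w)
      = Polynomial.C ((Fintype.card F : ℂ) ^ ((∑ i, d i) - rhat))
          * we (CCsub : Set (Fin n → F)) :=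
  stmt_14_general d A B Cm D hA hB hr lam hlam Δ K Δstar CCsub Ccon hΔ hCCsub hCcon hK hCCrank
    hCconrank hstar1 hstar2
end

section
/- Let Λ be the adjacency matrix and H the MacWilliams matrix, and set ℓ_{X,Y} := (HΛH)_{X,Y}. Then for any nonzero (X,Y) ∈ F^δ × F^δ, q^δ ℓ_{X,Y} = Σ_{(Z₁,Z₂) ∈ (X,Y)^⊥} λ_{Z₁,Z₂} − (1/(q−1)) Σ_{(Z₁,Z₂) ∉ (X,Y)^⊥} λ_{Z₁,Z₂}, where (X,Y)^⊥ is the orthogonal of the line spanned by (X,Y) in F^{2δ}. Moreover q^δ ℓ_{0,0} = Σ_{(Z₁,Z₂)} λ_{Z₁,Z₂}. -/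
/-!
The map `τ` is the trace of `F` over `ZMod p`, so `ψ a = ζ ^ τ(a)` is a nontrivial additive
character of `F` and `H X Y = q^{-δ/2} ψ(X ⬝ᵥ Y)`; hence
`q^δ (HΛH)_{X,Y} = ∑_w ψ(X ⬝ᵥ w₁ + Y ⬝ᵥ w₂) λ_w`. Scaling the weight enumerator's set by a
nonzero `α` does not change it, so `λ_{αw} = λ_w`, and substituting `w ↦ α w` shows that the sum
is unchanged when `ψ(t)` is replaced by `ψ(α t)`. Summing over all `α ∈ F` and using
`∑_α ψ(α t) = q [t = 0]` gives `(q - 1) · sum + ∑_w λ_w = q ∑_{t(w) = 0} λ_w`.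
-/

open Matrix Pointwise

theorem eq_trace_of_algebraMap_eq_sum_pow {p s : ℕ} [Fact p.Prime] {F : Type*} [Field F]
    [Fintype F] [Algebra (ZMod p) F] (hq : Fintype.card F = p ^ s) {τ : F → ZMod p}
    (hτ : ∀ a : F, algebraMap (ZMod p) F (τ a) = ∑ i ∈ Finset.range s, a ^ p ^ i) :
    τ = Algebra.trace (ZMod p) F := by
  have hrank : Module.finrank (ZMod p) F = s := by
    refine Nat.pow_right_injective (Fact.out : p.Prime).two_le ?_
    simp only
    rw [← hq, Module.card_eq_pow_finrank (K := ZMod p), ZMod.card]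
  funext a
  apply (algebraMap (ZMod p) F).injective
  rw [hτ, FiniteField.algebraMap_trace_eq_sum_pow, Nat.card_zmod, hrank]

theorem AddChar.zmodChar_compAddMonoidHom_trace_ne_one {p : ℕ} [Fact p.Prime] {F C : Type*}
    [Field F] [Fintype F] [Algebra (ZMod p) F] [CommMonoid C] {ζ : C}
    (hζ : IsPrimitiveRoot ζ p) :
    (zmodChar p hζ.pow_eq_one).compAddMonoidHom
      (Algebra.trace (ZMod p) F).toAddMonoidHom ≠ 1 := by
  have : Fact (1 < p) := ⟨(Fact.out : p.Prime).one_lt⟩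
  obtain ⟨a, ha⟩ := Algebra.trace_surjective (ZMod p) F 1
  refine AddChar.ne_one_iff.2 ⟨a, ?_⟩
  simpa [ha, zmodChar_apply, ZMod.val_one] using hζ.ne_one (Fact.out : 1 < p)

namespace AddChar

variable {F V M : Type*} [Field F] [MulAction F V] [Fintype V] [AddCommGroup M] [Module ℂ M]

theorem sum_apply_mul_smul_eq_of_homogeneous (ψ : AddChar F ℂ) {t : V → F}
    (ht : ∀ (α : F) v, t (α • v) = α * t v) {f : V → M}
    (hf : ∀ α : F, α ≠ 0 → ∀ v, f (α • v) = f v) {α : F} (hα : α ≠ 0) :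
    ∑ v, ψ (α * t v) • f v = ∑ v, ψ (t v) • f v := by
  refine Fintype.sum_bijective (α • ·) (MulAction.bijective (Units.mk0 α hα)) _ _ fun v => ?_
  simp only [ht, hf α hα]

theorem sum_apply_smul_eq_of_homogeneous [Fintype F] [DecidableEq F] (ψ : AddChar F ℂ)
    (hψ : ψ ≠ 1) {t : V → F} (ht : ∀ (α : F) v, t (α • v) = α * t v) {f : V → M}
    (hf : ∀ α : F, α ≠ 0 → ∀ v, f (α • v) = f v) :
    ∑ v, ψ (t v) • f v
      = ∑ v with t v = 0, f v - ((Fintype.card F : ℂ) - 1)⁻¹ • ∑ v with t v ≠ 0, f v := by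
  have hq : (Fintype.card F : ℂ) - 1 ≠ 0 :=
    sub_ne_zero.2 (by exact_mod_cast (Fintype.one_lt_card (α := F)).ne')
  set q : ℂ := (Fintype.card F : ℂ)
  set S := ∑ v, ψ (t v) • f v
  have hsum_orthogonality : ∑ α : F, ∑ v, ψ (α * t v) • f v = q • ∑ v with t v = 0, f v := by
    rw [Finset.sum_comm]
    simp_rw [← Finset.sum_smul, sum_mulShift _ (IsPrimitive.of_ne_one hψ)]
    rw [Finset.smul_sum, Finset.sum_filter]
    refine Finset.sum_congr rfl fun v _ => ?_
    split_ifs <;> simp [q]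
  have hsum_invariance : ∑ α : F, ∑ v, ψ (α * t v) • f v = ∑ v, f v + (q - 1) • S := by
    rw [← Finset.add_sum_erase _ _ (Finset.mem_univ 0),
      Finset.sum_congr rfl fun α hα => sum_apply_mul_smul_eq_of_homogeneous ψ ht hf
        (Finset.ne_of_mem_erase hα), Finset.sum_const,
      Finset.card_erase_of_mem (Finset.mem_univ 0), Finset.card_univ, ← Nat.cast_smul_eq_nsmul ℂ, Nat.cast_pred Fintype.card_pos]
    simp only [zero_mul, map_zero_eq_one, one_smul]
    rfl
  rw [← Finset.sum_filter_add_sum_filter_not _ (fun v => t v = 0), hsum_orthogonality] at hsum_invariance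
  have hscaled : (q - 1) • S = (q - 1) • ∑ v with t v = 0, f v - ∑ v with t v ≠ 0, f v := by
    linear_combination (norm := module) -hsum_invariance
  rw [← inv_smul_smul₀ hq S, hscaled, smul_sub, inv_smul_smul₀ hq]

end AddChar

theorem we_smul {n : ℕ} {F : Type} [Field F] [Fintype F] [DecidableEq F] {α : F} (hα : α ≠ 0)
    (S : Set (Fin n → F)) : we (α • S) = we S := by
  classical
  unfold we
  refine (Fintype.sum_bijective (α • ·) (MulAction.bijective (Units.mk0 α hα)) _ _
    fun a => ?_).symm
  simp only [Set.smul_mem_smul_set_iff₀ hα,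
    hammingNorm_smul (fun _ => IsLeftRegular.isSMulRegular (mul_right_injective₀ hα))]

def transitionOutputs {σ κ ι F : Type*} [Fintype σ] [Fintype κ] [CommSemiring F]
    (A : Matrix σ σ F) (B : Matrix κ σ F) (C : Matrix σ ι F) (D : Matrix κ ι F) (X Y : σ → F) :
    Set (ι → F) :=
  {v | ∃ u : κ → F, Y = X ᵥ* A + u ᵥ* B ∧ v = X ᵥ* C + u ᵥ* D}

theorem transitionOutputs_smul {σ κ ι F : Type*} [Fintype σ] [Fintype κ] [Field F]
    (A : Matrix σ σ F) (B : Matrix κ σ F) (C : Matrix σ ι F) (D : Matrix κ ι F) (X Y : σ → F)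
    {α : F} (hα : α ≠ 0) :
    transitionOutputs A B C D (α • X) (α • Y) = α • transitionOutputs A B C D X Y := by
  ext v
  simp only [transitionOutputs, Set.mem_smul_set_iff_inv_smul_mem₀ hα, Set.mem_ofPred_eq]
  constructor
  · rintro ⟨u, hY, hv⟩
    refine ⟨α⁻¹ • u, ?_, ?_⟩
    · rw [← inv_smul_smul₀ hα Y, hY]
      simp [smul_vecMul, smul_add, inv_smul_smul₀ hα]
    · simp [hv, smul_vecMul, smul_add, inv_smul_smul₀ hα]
  · rintro ⟨u, hY, hv⟩
    refine ⟨α • u, ?_, ?_⟩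
    · simp [hY, smul_vecMul, smul_add]
    · rw [← smul_inv_smul₀ hα v, hv]
      simp [smul_vecMul, smul_add]

theorem Complex.ofReal_inv_sqrt_sq {r : ℝ} (hr : 0 ≤ r) :
    ((Real.sqrt r)⁻¹ : ℂ) ^ 2 = (r : ℂ)⁻¹ := by
  rw [inv_pow, ← ofReal_pow, Real.sq_sqrt hr]

theorem Matrix.map_C_mul_mul_map_C_apply {V R : Type*} [Fintype V] [CommSemiring R]
    (H : Matrix V V R) (M : Matrix V V (Polynomial R)) (X Y : V) :
    (H.map Polynomial.C * M * H.map Polynomial.C) X Y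
      = ∑ w : V × V, (H X w.1 * H w.2 Y) • M w.1 w.2 := by
  simp only [mul_apply, map_apply, Finset.sum_mul, Fintype.sum_prod_type]
  rw [Finset.sum_comm]
  refine Finset.sum_congr rfl fun i _ => Finset.sum_congr rfl fun j _ => ?_
  rw [← Polynomial.C_mul', Polynomial.C_mul]
  ring

theorem Matrix.map_C_mul_mul_map_C_apply_of_eq_addChar {ι F : Type*} [Fintype ι] [DecidableEq ι]
    [Fintype F] [CommRing F] (ψ : AddChar F ℂ) (c : ℂ) {H : Matrix (ι → F) (ι → F) ℂ}
    (hH : ∀ X Y, H X Y = c * ψ (X ⬝ᵥ Y)) (M : Matrix (ι → F) (ι → F) (Polynomial ℂ))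
    (X Y : ι → F) :
    (H.map Polynomial.C * M * H.map Polynomial.C) X Y
      = ∑ w : (ι → F) × (ι → F), (c ^ 2 * ψ (X ⬝ᵥ w.1 + Y ⬝ᵥ w.2)) • M w.1 w.2 := by
  rw [map_C_mul_mul_map_C_apply]
  refine Finset.sum_congr rfl fun w _ => ?_
  rw [hH, hH, AddChar.map_add_eq_mul, dotProduct_comm w.2]
  ring_nf

theorem stmt_15_general {p s k n : ℕ} [Fact p.Prime]
    {F : Type} [Field F] [Fintype F] [DecidableEq F] [Algebra (ZMod p) F]
    (hq : Fintype.card F = p ^ s)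
    (ζ : ℂ) (hζ : IsPrimitiveRoot ζ p)
    (τ : F → ZMod p)
    (hτ : ∀ a : F, algebraMap (ZMod p) F (τ a) = ∑ i ∈ Finset.range s, a ^ p ^ i)
    (d : Fin k → ℕ)
    (A : Matrix (Σ i, Fin (d i)) (Σ i, Fin (d i)) F)
    (B : Matrix (Fin k) (Σ i, Fin (d i)) F)
    (Cm : Matrix (Σ i, Fin (d i)) (Fin n) F)
    (D : Matrix (Fin k) (Fin n) F)
    (lam : (((Σ i, Fin (d i)) → F) × ((Σ i, Fin (d i)) → F)) → Polynomial ℂ)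
    (hlam : ∀ w, lam w
      = we {v | ∃ u : Fin k → F, w.2 = w.1 ᵥ* A + u ᵥ* B ∧ v = w.1 ᵥ* Cm + u ᵥ* D})
    (H : Matrix ((Σ i, Fin (d i)) → F) ((Σ i, Fin (d i)) → F) ℂ)
    (hH : ∀ X Y, H X Y = ((Real.sqrt (((p : ℝ) ^ s) ^ (∑ i, d i)))⁻¹ : ℂ)
        * ζ ^ (τ (∑ x, X x * Y x)).val)
    (Λ : Matrix ((Σ i, Fin (d i)) → F) ((Σ i, Fin (d i)) → F) (Polynomial ℂ))
    (hΛ : ∀ X Y, Λ X Y = lam (X, Y)) :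
    (∀ X Y : (Σ i, Fin (d i)) → F, ¬(X = 0 ∧ Y = 0) →
      Polynomial.C ((Fintype.card F : ℂ) ^ (∑ i, d i))
          * (H.map Polynomial.C * Λ * H.map Polynomial.C) X Y
        = (∑ w : ((Σ i, Fin (d i)) → F) × ((Σ i, Fin (d i)) → F),
            if (∑ x, X x * w.1 x) + (∑ x, Y x * w.2 x) = 0 then lam w else 0)
          - Polynomial.C (((Fintype.card F : ℂ) - 1)⁻¹)
            * (∑ w : ((Σ i, Fin (d i)) → F) × ((Σ i, Fin (d i)) → F),
                if (∑ x, X x * w.1 x) + (∑ x, Y x * w.2 x) = 0 then 0 else lam w)) ∧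
    Polynomial.C ((Fintype.card F : ℂ) ^ (∑ i, d i))
        * (H.map Polynomial.C * Λ * H.map Polynomial.C) 0 0
      = ∑ w : ((Σ i, Fin (d i)) → F) × ((Σ i, Fin (d i)) → F), lam w := by
  obtain rfl := eq_trace_of_algebraMap_eq_sum_pow hq hτ
  set ψ := (AddChar.zmodChar p hζ.pow_eq_one).compAddMonoidHom
    (Algebra.trace (ZMod p) F).toAddMonoidHom
  set c : ℂ := ((Real.sqrt (((p : ℝ) ^ s) ^ (∑ i, d i)))⁻¹ : ℂ)
  have hc : (Fintype.card F : ℂ) ^ (∑ i, d i) * c ^ 2 = 1 := by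
    rw [Complex.ofReal_inv_sqrt_sq (by positivity), hq]
    push_cast
    exact mul_inv_cancel₀ (pow_ne_zero _ (pow_ne_zero _ (Nat.cast_ne_zero.2 (NeZero.ne p))))
  have hentry : ∀ X Y, Polynomial.C ((Fintype.card F : ℂ) ^ (∑ i, d i))
      * (H.map Polynomial.C * Λ * H.map Polynomial.C) X Y
      = ∑ w : ((Σ i, Fin (d i)) → F) × ((Σ i, Fin (d i)) → F),
          ψ (X ⬝ᵥ w.1 + Y ⬝ᵥ w.2) • lam w := by
    intro X Y
    rw [map_C_mul_mul_map_C_apply_of_eq_addChar ψ c hH, Polynomial.C_mul', Finset.smul_sum]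
    simp only [smul_smul, ← mul_assoc, hc, one_mul, hΛ]
  have hlam_smul : ∀ α : F, α ≠ 0 → ∀ w, lam (α • w) = lam w := by
    intro α hα w
    rw [hlam, hlam]
    exact (congrArg we (transitionOutputs_smul A B Cm D w.1 w.2 hα)).trans (we_smul hα _)
  refine ⟨fun X Y _ => ?_, ?_⟩
  · rw [hentry]
    have hsum := AddChar.sum_apply_smul_eq_of_homogeneous ψ
      (AddChar.zmodChar_compAddMonoidHom_trace_ne_one hζ)
      (t := fun w => X ⬝ᵥ w.1 + Y ⬝ᵥ w.2) (by simp [dotProduct_smul, mul_add]) hlam_smul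
    rw [Polynomial.C_mul']
    simp only [Finset.sum_filter, ite_not] at hsum
    exact hsum
  · rw [hentry]
    simp

/-- Let `Λ` be the adjacency matrix of a minimal encoder of an
`(n,k,δ)` convolutional code, `H` the MacWilliams matrix on `F^δ`, and
`ℓ_{X,Y} = (HΛH)_{X,Y}`.  Then for nonzero `(X,Y)`:
`q^δ ℓ_{X,Y} = ∑_{(Z₁,Z₂) ⊥ (X,Y)} λ_{Z₁,Z₂} − (q−1)⁻¹ ∑_{(Z₁,Z₂) ⊄ (X,Y)^⊥} λ_{Z₁,Z₂}`,
and moreover `q^δ ℓ_{0,0} = ∑_{(Z₁,Z₂)} λ_{Z₁,Z₂}`. -/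
theorem stmt_15 {p s k n : ℕ} [Fact p.Prime] (hs : 0 < s)
    {F : Type} [Field F] [Fintype F] [DecidableEq F] [CharP F p] [Algebra (ZMod p) F]
    (hq : Fintype.card F = p ^ s)
    (ζ : ℂ) (hζ : IsPrimitiveRoot ζ p)
    (τ : F → ZMod p)
    (hτ : ∀ a : F, algebraMap (ZMod p) F (τ a) = ∑ i ∈ Finset.range s, a ^ p ^ i)
    (G : Matrix (Fin k) (Fin n) (Polynomial F))
    (d : Fin k → ℕ)
    (hGdeg : ∀ i j, (G i j).natDegree ≤ d i)
    (hGbasic : ∃ G' : Matrix (Fin n) (Fin k) (Polynomial F), G * G' = 1)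
    (hGmin : LinearIndependent F (fun i : Fin k => fun j : Fin n => (G i j).coeff (d i)))
    (A : Matrix (Σ i, Fin (d i)) (Σ i, Fin (d i)) F)
    (B : Matrix (Fin k) (Σ i, Fin (d i)) F)
    (Cm : Matrix (Σ i, Fin (d i)) (Fin n) F)
    (D : Matrix (Fin k) (Fin n) F)
    (hA : ∀ x y, A x y = if x.1 = y.1 ∧ (x.2 : ℕ) + 1 = (y.2 : ℕ) then 1 else 0)
    (hB : ∀ i y, B i y = if i = y.1 ∧ (y.2 : ℕ) = 0 then 1 else 0)
    (hC : ∀ x j, Cm x j = (G x.1 j).coeff ((x.2 : ℕ) + 1))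
    (hD : ∀ i j, D i j = (G i j).coeff 0)
    (lam : (((Σ i, Fin (d i)) → F) × ((Σ i, Fin (d i)) → F)) → Polynomial ℂ)
    (hlam : ∀ w, lam w
      = we {v | ∃ u : Fin k → F, w.2 = w.1 ᵥ* A + u ᵥ* B ∧ v = w.1 ᵥ* Cm + u ᵥ* D})
    (H : Matrix ((Σ i, Fin (d i)) → F) ((Σ i, Fin (d i)) → F) ℂ)
    (hH : ∀ X Y, H X Y = ((Real.sqrt (((p : ℝ) ^ s) ^ (∑ i, d i)))⁻¹ : ℂ)
        * ζ ^ (τ (∑ x, X x * Y x)).val)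
    (Λ : Matrix ((Σ i, Fin (d i)) → F) ((Σ i, Fin (d i)) → F) (Polynomial ℂ))
    (hΛ : ∀ X Y, Λ X Y = lam (X, Y)) :
    (∀ X Y : (Σ i, Fin (d i)) → F, ¬(X = 0 ∧ Y = 0) →
      Polynomial.C ((Fintype.card F : ℂ) ^ (∑ i, d i))
          * (H.map Polynomial.C * Λ * H.map Polynomial.C) X Y
        = (∑ w : ((Σ i, Fin (d i)) → F) × ((Σ i, Fin (d i)) → F),
            if (∑ x, X x * w.1 x) + (∑ x, Y x * w.2 x) = 0 then lam w else 0)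
          - Polynomial.C (((Fintype.card F : ℂ) - 1)⁻¹)
            * (∑ w : ((Σ i, Fin (d i)) → F) × ((Σ i, Fin (d i)) → F),
                if (∑ x, X x * w.1 x) + (∑ x, Y x * w.2 x) = 0 then 0 else lam w)) ∧
    Polynomial.C ((Fintype.card F : ℂ) ^ (∑ i, d i))
        * (H.map Polynomial.C * Λ * H.map Polynomial.C) 0 0
      = ∑ w : ((Σ i, Fin (d i)) → F) × ((Σ i, Fin (d i)) → F), lam w :=
  stmt_15_general hq ζ hζ τ hτ d A B Cm D lam hlam H hH Λ hΛ
end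

section
/- Let C be an (n,k,δ) convolutional code with controller canonical form (A,B,C,D) and dual code Ĉ with controller canonical form (Â,B̂,Ĉ,D̂), and suppose all Forney indices of Ĉ equal 0 or 1 with exactly δ indices equal to 1 (i.e. r̂ = δ). Then the δ × δ matrix B̂^t D̂ C^t is invertible over F. -/
open Matrix

/-- Over a field: if `A` has a right inverse, `B` has a right inverse, `A Bᵀ = 0` and
`k + m = n`, then every vector killed by `A` lies in the row span of `B`. -/
lemma aux_span {k m n : ℕ} (hkm : k + m = n) {K : Type} [Field K]
    (A : Matrix (Fin k) (Fin n) K) (B : Matrix (Fin m) (Fin n) K)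
    (A' : Matrix (Fin n) (Fin k) K) (hA : A * A' = 1)
    (B' : Matrix (Fin n) (Fin m) K) (hB : B * B' = 1)
    (hAB : A * Bᵀ = 0)
    (u : Fin n → K) (hu : A *ᵥ u = 0) :
    ∃ c : Fin m → K, c ᵥ* B = u := by
  classical
  have hsur : Function.Surjective A.mulVecLin := by
    intro y
    exact ⟨A' *ᵥ y, by simp [Matrix.mulVecLin_apply, Matrix.mulVec_mulVec, hA]⟩
  have hrange : LinearMap.range A.mulVecLin = ⊤ := LinearMap.range_eq_top.mpr hsur
  have hker : Module.finrank K (LinearMap.ker A.mulVecLin) = m := by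
    have h1 := LinearMap.finrank_range_add_finrank_ker A.mulVecLin
    rw [hrange, finrank_top] at h1
    rw [Module.finrank_fin_fun, Module.finrank_fin_fun] at h1
    omega
  have hinj : Function.Injective B.vecMulLinear := by
    intro c₁ c₂ h
    have h2 := congrArg (fun x => x ᵥ* B') h
    simpa [Matrix.vecMulLinear_apply, Matrix.vecMul_vecMul, hB] using h2
  have hfr : Module.finrank K (LinearMap.range B.vecMulLinear) = m := by
    rw [LinearMap.finrank_range_of_inj hinj, Module.finrank_fin_fun]
  have hle : LinearMap.range B.vecMulLinear ≤ LinearMap.ker A.mulVecLin := by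
    rintro x ⟨c, rfl⟩
    simp only [LinearMap.mem_ker, Matrix.mulVecLin_apply, Matrix.vecMulLinear_apply]
    rw [Matrix.mulVec_vecMul, hAB, Matrix.zero_mulVec]
  have heq : LinearMap.range B.vecMulLinear = LinearMap.ker A.mulVecLin :=
    Submodule.eq_of_le_of_finrank_le hle (by rw [hker, hfr])
  have hmem : u ∈ LinearMap.range B.vecMulLinear := by
    rw [heq]
    exact hu
  obtain ⟨c, hc⟩ := hmem
  exact ⟨c, hc⟩

lemma aux_module {k m n : ℕ} (hkm : k + m = n) {F : Type} [Field F]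
    (G : Matrix (Fin k) (Fin n) (Polynomial F))
    (G' : Matrix (Fin n) (Fin k) (Polynomial F)) (hG : G * G' = 1)
    (Gh : Matrix (Fin m) (Fin n) (Polynomial F))
    (Gh' : Matrix (Fin n) (Fin m) (Polynomial F)) (hGh : Gh * Gh' = 1)
    (horth : G * Ghᵀ = 0)
    (U : Fin n → Polynomial F) (hU : ∀ x, ∑ j, U j * G x j = 0) :
    ∃ W : Fin m → Polynomial F, ∀ j, ∑ i, W i * Gh i j = U j := by
  classical
  set K := FractionRing (Polynomial F)
  set φ : Polynomial F →+* K := algebraMap (Polynomial F) K with hφdef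
  have hφ : Function.Injective φ := IsFractionRing.injective _ _
  have hmapmul : ∀ {p q r : ℕ} (M : Matrix (Fin p) (Fin q) (Polynomial F))
      (N : Matrix (Fin q) (Fin r) (Polynomial F)),
      (M * N).map φ = M.map φ * N.map φ := fun M N => Matrix.map_mul
  have hA : G.map φ * G'.map φ = 1 := by
    rw [← hmapmul, hG, Matrix.map_one φ (map_zero φ) (map_one φ)]
  have hB : Gh.map φ * Gh'.map φ = 1 := by
    rw [← hmapmul, hGh, Matrix.map_one φ (map_zero φ) (map_one φ)]
  have hAB : G.map φ * (Gh.map φ)ᵀ = 0 := by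
    rw [← Matrix.transpose_map, ← hmapmul, horth]
    ext i j
    simp [Matrix.map_apply]
  have hu : (G.map φ) *ᵥ (fun j => φ (U j)) = 0 := by
    funext x
    have h0 : ∑ j, G x j * U j = 0 := by
      rw [← hU x]; exact Finset.sum_congr rfl fun j _ => mul_comm _ _
    simp only [Matrix.mulVec, dotProduct, Matrix.map_apply, Pi.zero_apply]
    calc ∑ j, φ (G x j) * φ (U j) = φ (∑ j, G x j * U j) := by
          rw [map_sum]
          exact Finset.sum_congr rfl fun j _ => (map_mul φ _ _).symm
      _ = 0 := by rw [h0, map_zero]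
  obtain ⟨c, hc⟩ := aux_span hkm (G.map φ) (Gh.map φ) (G'.map φ) hA (Gh'.map φ) hB hAB _ hu
  -- vecMul commutes with map
  have hmapvm : ∀ {p q : ℕ} (M : Matrix (Fin p) (Fin q) (Polynomial F))
      (x : Fin p → Polynomial F),
      (fun i => φ (x i)) ᵥ* M.map φ = fun j => φ ((x ᵥ* M) j) := by
    intro p q M x
    funext j
    simp only [Matrix.vecMul, dotProduct, Matrix.map_apply, map_sum]
    exact Finset.sum_congr rfl fun i _ => (map_mul φ _ _).symm
  have key : ∀ j, (U ᵥ* (Gh' * Gh)) j = U j := by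
    have h1 : (fun j => φ (U j)) ᵥ* ((Gh' * Gh).map φ) = fun j => φ (U j) := by
      rw [hmapmul, ← hc, Matrix.vecMul_vecMul, ← Matrix.mul_assoc, hB, Matrix.one_mul]
    intro j
    apply hφ
    have h2 := congrFun (hmapvm (Gh' * Gh) U) j
    rw [h1] at h2
    exact h2.symm
  refine ⟨U ᵥ* Gh', fun j => ?_⟩
  have h3 : ((U ᵥ* Gh') ᵥ* Gh) j = U j := by rw [Matrix.vecMul_vecMul]; exact key j
  rw [← h3]
  simp [Matrix.vecMul, dotProduct]

open Polynomial in

lemma aux_deg {m n : ℕ} {F : Type} [Field F]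
    (Gh : Matrix (Fin m) (Fin n) (Polynomial F)) (dh : Fin m → ℕ)
    (hGhdeg : ∀ i j, (Gh i j).natDegree ≤ dh i)
    (hGhmin : LinearIndependent F (fun i : Fin m => fun j : Fin n => (Gh i j).coeff (dh i)))
    (W : Fin m → Polynomial F) (u : Fin n → F)
    (hW : ∀ j, ∑ i, W i * Gh i j = Polynomial.C (u j)) :
    ∀ i, dh i = 1 → W i = 0 := by
  classical
  by_contra hcon
  push_neg at hcon
  obtain ⟨i₀, hdi₀, hWi₀⟩ := hcon
  set S : Finset (Fin m) := Finset.univ.filter (fun i => W i ≠ 0) with hS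
  have hi₀S : i₀ ∈ S := by simp [hS, hWi₀]
  set t : ℕ := S.sup (fun i => (W i).natDegree + dh i) with ht
  have ht1 : 1 ≤ t := by
    have h : (W i₀).natDegree + dh i₀ ≤ t := Finset.le_sup (f := fun i => (W i).natDegree + dh i) hi₀S
    omega
  have hdht : ∀ i ∈ S, dh i ≤ t := by
    intro i hi
    have h : (W i).natDegree + dh i ≤ t := Finset.le_sup (f := fun i => (W i).natDegree + dh i) hi
    omega
  set c : Fin m → F := fun i => (W i).coeff (t - dh i) with hc
  have hcoeff : ∀ j, ∑ i, c i * (Gh i j).coeff (dh i) = 0 := by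
    intro j
    have h0 : (∑ i, W i * Gh i j).coeff t = 0 := by
      rw [hW j, Polynomial.coeff_C, if_neg (by omega)]
    rw [Polynomial.finset_sum_coeff] at h0
    rw [← h0]
    refine Finset.sum_congr rfl fun i _ => ?_
    by_cases hWi : W i = 0
    · simp [hc, hWi]
    · have hiS : i ∈ S := by simp [hS, hWi]
      have hle : (W i).natDegree + dh i ≤ t := Finset.le_sup (f := fun i => (W i).natDegree + dh i) hiS
      have hsub : t - dh i + dh i = t := Nat.sub_add_cancel (hdht i hiS)
      rw [← hsub, Polynomial.coeff_mul_add_eq_of_natDegree_le (by omega) (hGhdeg i j)]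
  have hczero : ∀ i, c i = 0 := by
    have := Fintype.linearIndependent_iff.mp hGhmin c ?_
    · exact this
    · funext j
      rw [Finset.sum_apply]
      simp only [Pi.smul_apply, smul_eq_mul]
      exact hcoeff j
  obtain ⟨i₁, hi₁S, hi₁⟩ := Finset.exists_mem_eq_sup S ⟨i₀, hi₀S⟩
    (fun i => (W i).natDegree + dh i)
  have hWi₁ : W i₁ ≠ 0 := by
    have := hi₁S
    simp [hS] at this
    exact this
  have hi₁' : (W i₁).natDegree + dh i₁ = t := hi₁.symm
  have harg : t - dh i₁ = (W i₁).natDegree := by omega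
  have : c i₁ = (W i₁).leadingCoeff := by
    show (W i₁).coeff (t - dh i₁) = _
    rw [harg, Polynomial.leadingCoeff]
  rw [hczero i₁] at this
  exact hWi₁ (Polynomial.leadingCoeff_eq_zero.mp this.symm)


/-- Let `C` be an `(n,k,δ)` convolutional code with minimal basic
encoder `G` (controller canonical form `(A,B,Cm,D)`), and let its dual `Ĉ` have
minimal basic encoder `Ĝ` (controller canonical form `(Â,B̂,Ĉm,D̂)`), where all
Forney indices of `Ĉ` are `0` or `1` with exactly `δ` of them equal to `1`
(`r̂ = δ`).  Then the `δ × δ` matrix `B̂ᵀ D̂ Cmᵀ` is invertible over `F`. -/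
theorem stmt_17 {k m n : ℕ} (hkm : k + m = n)
    {F : Type} [Field F] [Fintype F] [DecidableEq F]
    (G : Matrix (Fin k) (Fin n) (Polynomial F)) (d : Fin k → ℕ)
    (hGdeg : ∀ i j, (G i j).natDegree ≤ d i)
    (hGbasic : ∃ G' : Matrix (Fin n) (Fin k) (Polynomial F), G * G' = 1)
    (hGmin : LinearIndependent F (fun i : Fin k => fun j : Fin n => (G i j).coeff (d i)))
    (Gh : Matrix (Fin m) (Fin n) (Polynomial F)) (dh : Fin m → ℕ)
    (hGhdeg : ∀ i j, (Gh i j).natDegree ≤ dh i)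
    (hGhbasic : ∃ Gh' : Matrix (Fin n) (Fin m) (Polynomial F), Gh * Gh' = 1)
    (hGhmin : LinearIndependent F (fun i : Fin m => fun j : Fin n => (Gh i j).coeff (dh i)))
    (horth : G * Ghᵀ = 0)
    (hdh1 : ∀ i, dh i ≤ 1)
    (hrhat : ∑ i, dh i = ∑ i, d i)
    (Cm : Matrix (Σ i, Fin (d i)) (Fin n) F)
    (hC : ∀ x j, Cm x j = (G x.1 j).coeff ((x.2 : ℕ) + 1))
    (Bh : Matrix (Fin m) (Σ i, Fin (dh i)) F)
    (Dh : Matrix (Fin m) (Fin n) F)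
    (hBh : ∀ i y, Bh i y = if i = y.1 ∧ (y.2 : ℕ) = 0 then 1 else 0)
    (hDh : ∀ i j, Dh i j = (Gh i j).coeff 0) :
    ∃ N : Matrix (Σ i, Fin (d i)) (Σ i, Fin (dh i)) F,
      (Bhᵀ * Dh * Cmᵀ) * N = 1 ∧ N * (Bhᵀ * Dh * Cmᵀ) = 1 := by
  classical
  obtain ⟨G', hG'⟩ := hGbasic
  obtain ⟨Gh', hGh'⟩ := hGhbasic
  have hdh : ∀ y : Σ i, Fin (dh i), dh y.1 = 1 := by
    intro y
    have h1 := y.2.isLt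
    have h2 := hdh1 y.1
    omega
  have hBhD : ∀ (y : Σ i, Fin (dh i)) (j : Fin n), (Bhᵀ * Dh) y j = Dh y.1 j := by
    intro y j
    have hy2 : (y.2 : ℕ) = 0 := by have := y.2.isLt; have := hdh1 y.1; omega
    rw [Matrix.mul_apply]
    have h : ∀ i, Bhᵀ y i * Dh i j = (if i = y.1 then Dh y.1 j else 0) := by
      intro i
      rw [Matrix.transpose_apply, hBh]
      by_cases h : i = y.1 <;> simp [h, hy2]
    rw [Finset.sum_congr rfl fun i _ => h i, Finset.sum_ite_eq' Finset.univ y.1]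
    simp
  set E : Matrix (Fin n) (Fin m) F := Matrix.of (fun j i => (Gh' j i).coeff 0) with hE
  have hDhE : Dh * E = 1 := by
    ext i i'
    rw [Matrix.mul_apply]
    have h : ∀ j, Dh i j * E j i' = (Gh i j * Gh' j i').coeff 0 := by
      intro j
      rw [hDh, hE, Polynomial.mul_coeff_zero]
      rfl
    rw [Finset.sum_congr rfl fun j _ => h j, ← Polynomial.finset_sum_coeff,
      ← Matrix.mul_apply, hGh']
    by_cases h : i = i' <;> simp [Matrix.one_apply, h]
  -- Key injectivity
  have Hinj : ∀ v : (Σ i, Fin (dh i)) → F, v ᵥ* (Bhᵀ * Dh * Cmᵀ) = 0 → v = 0 := by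
    intro v hv
    set w : Fin m → F := fun i => ∑ t : Fin (dh i), v ⟨i, t⟩ with hw
    set u : Fin n → F := fun j => ∑ i, w i * Dh i j with hu
    have hu1 : v ᵥ* (Bhᵀ * Dh) = u := by
      funext j
      show ∑ y, v y * (Bhᵀ * Dh) y j = u j
      rw [Finset.sum_congr rfl fun y _ => by rw [hBhD y j]]
      have h2 : ∀ i : Fin m, w i * Dh i j = ∑ t : Fin (dh i), v ⟨i, t⟩ * Dh i j := by
        intro i
        rw [hw]
        exact Finset.sum_mul _ _ _
      rw [hu]
      show _ = ∑ i, w i * Dh i j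
      rw [Finset.sum_congr rfl fun i _ => h2 i, ← Finset.univ_sigma_univ, Finset.sum_sigma]
    have hu2 : u ᵥ* Cmᵀ = 0 := by
      rw [← hu1, Matrix.vecMul_vecMul]
      exact hv
    have hcoeffU : ∀ (x : Fin k) (ν : ℕ), ∑ j, u j * (G x j).coeff ν = 0 := by
      intro x ν
      match ν with
      | 0 =>
        have h1 : ∀ j, u j * (G x j).coeff 0 = ∑ i, w i * (Dh i j * (G x j).coeff 0) := by
          intro j
          rw [hu]
          show (∑ i, w i * Dh i j) * _ = _
          rw [Finset.sum_mul]
          exact Finset.sum_congr rfl fun i _ => (mul_assoc _ _ _)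
        rw [Finset.sum_congr rfl fun j _ => h1 j, Finset.sum_comm]
        refine Finset.sum_eq_zero fun i _ => ?_
        rw [← Finset.mul_sum]
        have h2 : ∑ j, Dh i j * (G x j).coeff 0 = 0 := by
          have h3 : ∀ j, Dh i j * (G x j).coeff 0 = (G x j * Gh i j).coeff 0 := by
            intro j
            rw [hDh, Polynomial.mul_coeff_zero, mul_comm]
          rw [Finset.sum_congr rfl fun j _ => h3 j, ← Polynomial.finset_sum_coeff]
          have h4 : ∑ j, G x j * Gh i j = 0 := by
            have h5 : (G * Ghᵀ) x i = (0 : Matrix (Fin k) (Fin m) (Polynomial F)) x i := by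
              rw [horth]
            rw [Matrix.mul_apply] at h5
            simpa [Matrix.transpose_apply] using h5
          rw [h4]
          simp
        rw [h2, mul_zero]
      | (s+1) =>
        by_cases hs : s < d x
        · have h6 := congrFun hu2 ⟨x, ⟨s, hs⟩⟩
          simp only [Matrix.vecMul, dotProduct, Matrix.transpose_apply,
            Pi.zero_apply] at h6
          rw [← h6]
          refine Finset.sum_congr rfl fun j _ => ?_
          rw [hC ⟨x, ⟨s, hs⟩⟩ j]
        · refine Finset.sum_eq_zero fun j _ => ?_
          rw [Polynomial.coeff_eq_zero_of_natDegree_lt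
            (lt_of_le_of_lt (hGdeg x j) (by omega)), mul_zero]
    have hUG : ∀ x, ∑ j, (Polynomial.C (u j)) * G x j = 0 := by
      intro x
      apply Polynomial.ext
      intro ν
      rw [Polynomial.finset_sum_coeff]
      simp only [Polynomial.coeff_C_mul, Polynomial.coeff_zero]
      exact hcoeffU x ν
    obtain ⟨W, hW⟩ := aux_module hkm G G' hG' Gh Gh' hGh' horth
      (fun j => Polynomial.C (u j)) hUG
    have hW0 : ∀ i, dh i = 1 → W i = 0 := aux_deg Gh dh hGhdeg hGhmin W u hW
    set w' : Fin m → F := fun i => (W i).coeff 0 with hw'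
    have hu3 : ∀ j, u j = ∑ i, w' i * Dh i j := by
      intro j
      have h7 := congrArg (fun p => Polynomial.coeff p 0) (hW j)
      simp only [Polynomial.finset_sum_coeff, Polynomial.mul_coeff_zero,
        Polynomial.coeff_C_zero] at h7
      rw [← h7]
      refine Finset.sum_congr rfl fun i _ => ?_
      rw [hw', hDh]
    have hwd : w = w' := by
      have hz : (w - w') ᵥ* Dh = 0 := by
        funext j
        simp only [Matrix.vecMul, dotProduct, Pi.zero_apply, Pi.sub_apply, sub_mul]
        rw [Finset.sum_sub_distrib]
        have hA : ∑ i, w i * Dh i j = u j := by rw [hu]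
        rw [hA, ← hu3 j, sub_self]
      have h8 := congrArg (fun x => x ᵥ* E) hz
      simp only [Matrix.vecMul_vecMul, hDhE, Matrix.vecMul_one, Matrix.zero_vecMul] at h8
      exact sub_eq_zero.mp h8
    funext y
    obtain ⟨i, t⟩ := y
    have hdi : dh i = 1 := hdh ⟨i, t⟩
    have hwi : w i = 0 := by
      rw [hwd, hw']
      show (W i).coeff 0 = 0
      rw [hW0 i hdi]
      simp
    have hst : ∀ s : Fin (dh i), s = t := by
      intro s
      apply Fin.ext
      have h1 := s.isLt
      have h2 := t.isLt
      omega
    have hsum : w i = v ⟨i, t⟩ := by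
      rw [hw]
      show ∑ s : Fin (dh i), v ⟨i, s⟩ = v ⟨i, t⟩
      have hcg : ∑ s : Fin (dh i), v ⟨i, s⟩ = ∑ _s : Fin (dh i), v ⟨i, t⟩ :=
        Finset.sum_congr rfl (fun s _ => by rw [hst s])
      rw [hcg, Finset.sum_const, Finset.card_univ, Fintype.card_fin, hdi, one_smul]
    rw [Pi.zero_apply, ← hsum, hwi]
  -- Build the two-sided inverse from injectivity
  have hcard : Fintype.card (Σ i, Fin (dh i)) = Fintype.card (Σ i, Fin (d i)) := by
    simp [Fintype.card_sigma, hrhat]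
  let e : (Σ i, Fin (dh i)) ≃ (Σ i, Fin (d i)) := Fintype.equivOfCardEq hcard
  set M := Bhᵀ * Dh * Cmᵀ with hM
  set M' : Matrix (Σ i, Fin (dh i)) (Σ i, Fin (dh i)) F := M.submatrix id ⇑e with hM'
  have hunit : IsUnit M' := by
    rw [← Matrix.vecMul_injective_iff_isUnit]
    intro v₁ v₂ hvv
    have h12 : (v₁ - v₂) ᵥ* M' = 0 := by
      show (v₁ - v₂) ᵥ* M' = 0
      rw [Matrix.sub_vecMul]
      show v₁ ᵥ* M' - v₂ ᵥ* M' = 0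
      have hvv' : v₁ ᵥ* M' = v₂ ᵥ* M' := hvv
      rw [hvv', sub_self]
    have h13 : (v₁ - v₂) ᵥ* M = 0 := by
      funext x
      have h14 := congrFun h12 (e.symm x)
      simp only [Matrix.vecMul, dotProduct, hM', Matrix.submatrix_apply, id_eq,
        Pi.zero_apply, Equiv.apply_symm_apply] at h14 ⊢
      exact h14
    have h15 := Hinj _ h13
    exact sub_eq_zero.mp h15
  have hdet : IsUnit M'.det := (Matrix.isUnit_iff_isUnit_det M').mp hunit
  refine ⟨(M'⁻¹).submatrix ⇑e.symm id, ?_, ?_⟩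
  · have h1 : M = M'.submatrix id ⇑e.symm := by
      ext a b
      simp [hM', Matrix.submatrix_apply, Equiv.apply_symm_apply]
    rw [h1, Matrix.submatrix_mul_equiv M' M'⁻¹ id e.symm id,
      Matrix.mul_nonsing_inv _ hdet, Matrix.submatrix_id_id]
  · have h1 : M = M'.submatrix id ⇑e.symm := by
      ext a b
      simp [hM', Matrix.submatrix_apply, Equiv.apply_symm_apply]
    rw [h1]
    rw [show (id : (Σ i, Fin (dh i)) → (Σ i, Fin (dh i))) = ⇑(Equiv.refl _) from rfl]
    rw [Matrix.submatrix_mul_equiv (M'⁻¹) M' ⇑e.symm (Equiv.refl _) ⇑e.symm,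
      Matrix.nonsing_inv_mul _ hdet, Matrix.submatrix_one_equiv e.symm]
end

section
/- With the assumptions of the previous context (r̂ = δ, so Â = 0 and Ĝ(z) = D̂ + z B̂Ĉ), the controller canonical forms satisfy Ĉ D^t B + Ĉ C^t A = − B̂^t D̂ C^t. -/
open Matrix

/-- With the assumptions of Statement 17 (in particular all Forney
indices of the dual code at most `1`, so `Â = 0` and `Ĝ(z) = D̂ + z B̂ Ĉm`), the
controller canonical forms of a minimal basic encoder `G` of `C` and a minimal basic
encoder `Ĝ` of the dual code satisfy `Ĉm Dᵀ B + Ĉm Cmᵀ A = − B̂ᵀ D̂ Cmᵀ`. -/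
theorem stmt_18 {k m n : ℕ} (hkm : k + m = n)
    {F : Type} [Field F] [Fintype F] [DecidableEq F]
    (G : Matrix (Fin k) (Fin n) (Polynomial F)) (d : Fin k → ℕ)
    (hGdeg : ∀ i j, (G i j).natDegree ≤ d i)
    (hGbasic : ∃ G' : Matrix (Fin n) (Fin k) (Polynomial F), G * G' = 1)
    (hGmin : LinearIndependent F (fun i : Fin k => fun j : Fin n => (G i j).coeff (d i)))
    (Gh : Matrix (Fin m) (Fin n) (Polynomial F)) (dh : Fin m → ℕ)
    (hGhdeg : ∀ i j, (Gh i j).natDegree ≤ dh i)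
    (hGhbasic : ∃ Gh' : Matrix (Fin n) (Fin m) (Polynomial F), Gh * Gh' = 1)
    (hGhmin : LinearIndependent F (fun i : Fin m => fun j : Fin n => (Gh i j).coeff (dh i)))
    (horth : G * Ghᵀ = 0)
    (hdh1 : ∀ i, dh i ≤ 1)
    (hrhat : ∑ i, dh i = ∑ i, d i)
    (A : Matrix (Σ i, Fin (d i)) (Σ i, Fin (d i)) F)
    (B : Matrix (Fin k) (Σ i, Fin (d i)) F)
    (Cm : Matrix (Σ i, Fin (d i)) (Fin n) F)
    (D : Matrix (Fin k) (Fin n) F)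
    (hA : ∀ x y, A x y = if x.1 = y.1 ∧ (x.2 : ℕ) + 1 = (y.2 : ℕ) then 1 else 0)
    (hB : ∀ i y, B i y = if i = y.1 ∧ (y.2 : ℕ) = 0 then 1 else 0)
    (hC : ∀ x j, Cm x j = (G x.1 j).coeff ((x.2 : ℕ) + 1))
    (hD : ∀ i j, D i j = (G i j).coeff 0)
    (Bh : Matrix (Fin m) (Σ i, Fin (dh i)) F)
    (Ch : Matrix (Σ i, Fin (dh i)) (Fin n) F)
    (Dh : Matrix (Fin m) (Fin n) F)
    (hBh : ∀ i y, Bh i y = if i = y.1 ∧ (y.2 : ℕ) = 0 then 1 else 0)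
    (hCh : ∀ x j, Ch x j = (Gh x.1 j).coeff ((x.2 : ℕ) + 1))
    (hDh : ∀ i j, Dh i j = (Gh i j).coeff 0) :
    Ch * Dᵀ * B + Ch * Cmᵀ * A = -(Bhᵀ * Dh * Cmᵀ) := by
  -- key orthogonality coefficient identity
  have key : ∀ (i : Fin k) (i' : Fin m) (s : ℕ),
      ∑ j, (Gh i' j).coeff 1 * (G i j).coeff s
        = -∑ j, (Gh i' j).coeff 0 * (G i j).coeff (s + 1) := by
    intro i i' s
    have h0 : (∑ j, G i j * Gh i' j) = 0 := by
      have := congrFun (congrFun horth i) i'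
      simpa [Matrix.mul_apply, Matrix.transpose_apply] using this
    have hc : (∑ j, G i j * Gh i' j).coeff (s + 1) = 0 := by rw [h0]; simp
    rw [Polynomial.finset_sum_coeff] at hc
    have hrw : ∀ j : Fin n, (G i j * Gh i' j).coeff (s + 1)
        = (Gh i' j).coeff 0 * (G i j).coeff (s + 1)
          + (Gh i' j).coeff 1 * (G i j).coeff s := by
      intro j
      have hdeg : (Gh i' j).degree ≤ 1 :=
        Polynomial.natDegree_le_iff_degree_le.mp ((hGhdeg i' j).trans (hdh1 i'))
      conv_lhs => rw [Polynomial.eq_X_add_C_of_degree_le_one hdeg]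
      rw [mul_add, ← mul_assoc, Polynomial.coeff_add, Polynomial.coeff_mul_X,
        Polynomial.coeff_mul_C, Polynomial.coeff_mul_C]
      ring
    simp only [hrw, Finset.sum_add_distrib] at hc
    rw [add_comm] at hc
    exact eq_neg_of_add_eq_zero_left hc
  ext x y
  obtain ⟨ih, p⟩ := x
  obtain ⟨i, q⟩ := y
  have hp0 : (p : ℕ) = 0 := by have := p.isLt; have := hdh1 ih; omega
  simp only [Matrix.add_apply, Matrix.neg_apply]
  have eR : (Bhᵀ * Dh * Cmᵀ) ⟨ih, p⟩ ⟨i, q⟩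
      = ∑ j, (Gh ih j).coeff 0 * (G i j).coeff ((q : ℕ) + 1) := by
    simp only [Matrix.mul_apply, Matrix.transpose_apply, hBh, hDh, hC, hp0, and_true,
      ite_mul, one_mul, zero_mul, Finset.sum_ite_eq', Finset.mem_univ, if_true]
  rw [eR]
  obtain ⟨qv, hqv⟩ := q
  cases qv with
  | zero =>
      have e2 : (Ch * Cmᵀ * A) ⟨ih, p⟩ ⟨i, ⟨0, hqv⟩⟩ = 0 := by
        rw [Matrix.mul_apply]
        apply Finset.sum_eq_zero
        intro z _
        rw [hA]
        simp
      have e1 : (Ch * Dᵀ * B) ⟨ih, p⟩ ⟨i, ⟨0, hqv⟩⟩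
          = ∑ j, (Gh ih j).coeff 1 * (G i j).coeff 0 := by
        rw [Matrix.mul_apply, Finset.sum_eq_single i]
        · rw [hB]
          simp [Matrix.mul_apply, hCh, hD, hp0]
        · intro i' _ hi'
          rw [hB]
          simp [hi']
        · simp
      rw [e1, e2, add_zero]
      simpa using key i ih 0
  | succ s =>
      have e1 : (Ch * Dᵀ * B) ⟨ih, p⟩ ⟨i, ⟨s + 1, hqv⟩⟩ = 0 := by
        rw [Matrix.mul_apply]
        apply Finset.sum_eq_zero
        intro i' _
        rw [hB]
        simp
      have e2 : (Ch * Cmᵀ * A) ⟨ih, p⟩ ⟨i, ⟨s + 1, hqv⟩⟩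
          = ∑ j, (Gh ih j).coeff 1 * (G i j).coeff (s + 1) := by
        rw [Matrix.mul_apply, Finset.sum_eq_single (⟨i, ⟨s, by omega⟩⟩ : Σ i, Fin (d i))]
        · rw [hA]
          simp [Matrix.mul_apply, hCh, hC, hp0]
        · intro z _ hz
          rcases z with ⟨zi, zr⟩
          rw [hA]
          by_cases hcond : zi = i ∧ ((zr : ℕ)) + 1 = ((⟨s + 1, hqv⟩ : Fin (d i)) : ℕ)
          · exfalso
            apply hz
            obtain ⟨rfl, h2⟩ := hcond
            simp only [Fin.val_mk] at h2
            exact congrArg (Sigma.mk zi) (Fin.ext (by simp only [Fin.val_mk]; omega))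
          · rw [if_neg hcond, mul_zero]
        · simp
      rw [e1, e2, zero_add]
      simpa using key i ih (s + 1)
end
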